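/- arXiv:2401.01766 — 9 statements merged into one kernel-verified Lean document; each statement's English description precedes it below -/
import Mathlib

section
/- For all n ≥ 3, the anti-Ramsey number ar(K_n, K_3) equals n − 1; that is, the maximum number of colors in an edge-coloring of the complete graph K_n containing no rainbow triangle is n − 1. -/
open Classical

noncomputable section

/-- A rainbow `k`-clique in the edge-colored graph `G^c`. -/
def HasRainbowClique {V : Type*} (G : SimpleGraph V) (c : Sym2 V → ℕ) (k : ℕ) : Prop :=
  ∃ S : Finset V, S.card = k ∧ (∀ x ∈ S, ∀ y ∈ S, x ≠ y → G.Adj x y) ∧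
    ∀ x ∈ S, ∀ y ∈ S, ∀ z ∈ S, ∀ w ∈ S,
      x ≠ y → z ≠ w → c s(x, y) = c s(z, w) → s(x, y) = s(z, w)

/-- The number of colors used on the edges of `G`. -/
noncomputable def ncolors {V : Type*} (G : SimpleGraph V) (c : Sym2 V → ℕ) : ℕ :=
  (c '' G.edgeSet).ncard

/-- The anti-Ramsey number `ar(G, K_k)`: the maximum number of colors of an
edge-coloring of `G` without a rainbow `K_k`. -/
noncomputable def antiRamsey {V : Type*} (G : SimpleGraph V) (k : ℕ) : ℕ :=
  sSup {m | ∃ c : Sym2 V → ℕ, ¬ HasRainbowClique G c k ∧ ncolors G c = m}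

/-! In a coloring of `K_n` without rainbow triangles, adding a vertex `v` to a vertex set `S`
creates at most one color not already present on `S`: if `va` and `vb` carried two distinct new
colors, then `vab` would be a rainbow triangle. Hence `K_n` sees at most `n - 1` colors.
Conversely, coloring the edge `ij` by `max i j` uses the `n - 1` colors `1, …, n - 1`, and in
every triangle the two edges at the largest vertex share its label. -/

namespace AntiRamsey

open Finset

variable {V : Type*}

theorem antiRamsey_eq_of_isGreatest {G : SimpleGraph V} {k m : ℕ}
    (h : IsGreatest {m | ∃ c : Sym2 V → ℕ, ¬ HasRainbowClique G c k ∧ ncolors G c = m} m) :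
    antiRamsey G k = m :=
  h.csSup_eq

theorem two_colors_eq_of_not_hasRainbowClique_three {G : SimpleGraph V} {c : Sym2 V → ℕ}
    (h : ¬ HasRainbowClique G c 3) {x y z : V}
    (hxy : G.Adj x y) (hyz : G.Adj y z) (hxz : G.Adj x z) :
    c s(x, y) = c s(y, z) ∨ c s(x, y) = c s(x, z) ∨ c s(y, z) = c s(x, z) := by
  by_contra! hne
  obtain ⟨h₁, h₂, h₃⟩ := hne
  apply h
  refine ⟨{x, y, z}, card_eq_three.mpr ⟨x, y, z, hxy.ne, hxz.ne, hyz.ne, rfl⟩, ?_, ?_⟩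
  · intro a ha b hb hab
    simp only [mem_insert, mem_singleton] at ha hb
    rcases ha with rfl | rfl | rfl <;> rcases hb with rfl | rfl | rfl <;>
      first | exact absurd rfl hab | assumption | exact SimpleGraph.Adj.symm ‹_›
  · intro a ha b hb d hd e he hab hde hc
    simp only [mem_insert, mem_singleton] at ha hb hd he
    rcases ha with rfl | rfl | rfl <;> rcases hb with rfl | rfl | rfl <;>
      rcases hd with rfl | rfl | rfl <;> rcases he with rfl | rfl | rfl <;>
      simp_all [Sym2.eq_swap]

def colorsOn (c : Sym2 V → ℕ) (S : Finset V) : Finset ℕ :=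
  S.offDiag.image fun p => c s(p.1, p.2)

theorem mem_colorsOn {c : Sym2 V → ℕ} {S : Finset V} {m : ℕ} :
    m ∈ colorsOn c S ↔ ∃ a ∈ S, ∃ b ∈ S, a ≠ b ∧ c s(a, b) = m := by
  simp [colorsOn, and_assoc]

@[simp]
theorem colorsOn_singleton (c : Sym2 V → ℕ) (v : V) : colorsOn c {v} = ∅ := by
  simp [colorsOn]

@[simp]
theorem colorsOn_empty (c : Sym2 V → ℕ) : colorsOn c ∅ = ∅ := by
  simp [colorsOn]

theorem image_edgeSet_top [Fintype V] (c : Sym2 V → ℕ) :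
    c '' (⊤ : SimpleGraph V).edgeSet = colorsOn c univ := by
  ext m
  simp [mem_colorsOn, SimpleGraph.edgeSet_top, Sym2.exists]

section NoRainbowTriangle

variable {c : Sym2 V → ℕ}

theorem exists_eq_of_mem_colorsOn_insert_sdiff {v : V} {S : Finset V} {m : ℕ}
    (hm : m ∈ colorsOn c (insert v S) \ colorsOn c S) : ∃ a ∈ S, a ≠ v ∧ c s(v, a) = m := by
  obtain ⟨hm, hmS⟩ := mem_sdiff.mp hm
  obtain ⟨a, ha, b, hb, hab, rfl⟩ := mem_colorsOn.mp hm
  rw [mem_insert] at ha hb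
  rcases ha with rfl | ha
  · exact ⟨b, hb.resolve_left hab.symm, hab.symm, rfl⟩
  rcases hb with rfl | hb
  · exact ⟨a, ha, hab, Sym2.eq_swap ▸ rfl⟩
  · exact absurd (mem_colorsOn.mpr ⟨a, ha, b, hb, hab, rfl⟩) hmS

theorem card_colorsOn_insert_le (h : ¬ HasRainbowClique (⊤ : SimpleGraph V) c 3) {v : V}
    {S : Finset V} :
    #(colorsOn c (insert v S)) ≤ #(colorsOn c S) + 1 := by
  have hnew : #(colorsOn c (insert v S) \ colorsOn c S) ≤ 1 := by
    refine card_le_one.mpr fun m hm m' hm' => ?_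
    obtain ⟨a, ha, hav, rfl⟩ := exists_eq_of_mem_colorsOn_insert_sdiff hm
    obtain ⟨b, hb, hbv, rfl⟩ := exists_eq_of_mem_colorsOn_insert_sdiff hm'
    obtain rfl | hab := eq_or_ne a b
    · rfl
    have hold : c s(a, b) ∈ colorsOn c S := mem_colorsOn.mpr ⟨a, ha, b, hb, hab, rfl⟩
    rcases two_colors_eq_of_not_hasRainbowClique_three h hav.symm hab hbv.symm with h' | h' | h'
    · exact absurd (h' ▸ hold) (mem_sdiff.mp hm).2
    · exact h'
    · exact absurd (h' ▸ hold) (mem_sdiff.mp hm').2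
  have := card_le_card_sdiff_add_card (s := colorsOn c (insert v S)) (t := colorsOn c S)
  omega

theorem card_colorsOn_lt (h : ¬ HasRainbowClique (⊤ : SimpleGraph V) c 3)
    {S : Finset V} (hS : S.Nonempty) : #(colorsOn c S) < #S := by
  induction hS using Nonempty.cons_induction with
  | singleton v => simp
  | cons v S hv _ ih =>
    rw [cons_eq_insert, card_insert_of_notMem hv]
    have := card_colorsOn_insert_le (v := v) (S := S) h
    omega

theorem ncolors_le_card_sub_one [Fintype V] (h : ¬ HasRainbowClique (⊤ : SimpleGraph V) c 3) :
    ncolors (⊤ : SimpleGraph V) c ≤ Fintype.card V - 1 := by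
  rw [ncolors, image_edgeSet_top, Set.ncard_coe_finset]
  rcases (univ : Finset V).eq_empty_or_nonempty with hV | hV
  · simp [hV]
  · have := card_colorsOn_lt h hV
    rw [card_univ] at this
    omega

end NoRainbowTriangle

def maxColoring (f : V → ℕ) : Sym2 V → ℕ :=
  Sym2.lift ⟨fun a b => max (f a) (f b), fun _ _ => max_comm _ _⟩

theorem not_hasRainbowClique_maxColoring (G : SimpleGraph V) (f : V → ℕ) {k : ℕ}
    (hk : 3 ≤ k) : ¬ HasRainbowClique G (maxColoring f) k := by
  rintro ⟨S, rfl, -, hrainbow⟩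
  obtain ⟨d, hd, hmax⟩ := S.exists_max_image f (card_pos.mp (by omega))
  obtain ⟨a, ha, b, hb, hab⟩ := one_lt_card.mp (show 1 < #(S.erase d) by
    rw [card_erase_of_mem hd]; omega)
  obtain ⟨had, ha⟩ := mem_erase.mp ha
  obtain ⟨hbd, hb⟩ := mem_erase.mp hb
  have hcolor : maxColoring f s(a, d) = maxColoring f s(b, d) := by
    simp [maxColoring, hmax a ha, hmax b hb]
  have := hrainbow a ha d hd b hb d hd had hbd hcolor
  simp [hab, had] at this

theorem ncolors_maxColoring_val (n : ℕ) :
    ncolors (⊤ : SimpleGraph (Fin n)) (maxColoring Fin.val) = n - 1 := by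
  have hcolors : colorsOn (maxColoring (Fin.val : Fin n → ℕ)) univ = Ico 1 n := by
    ext m
    simp only [mem_colorsOn, mem_univ, true_and, mem_Ico]
    constructor
    · rintro ⟨a, b, hab, rfl⟩
      have hval : a.val ≠ b.val := Fin.val_ne_of_ne hab
      exact ⟨by simp [maxColoring]; omega, max_lt a.isLt b.isLt⟩
    · rintro ⟨hm, hmn⟩
      exact ⟨⟨0, by omega⟩, ⟨m, hmn⟩, by simp [Fin.ext_iff]; omega, by simp [maxColoring]⟩
  rw [ncolors, image_edgeSet_top, hcolors, Set.ncard_coe_finset, Nat.card_Ico]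

end AntiRamsey

open AntiRamsey in
theorem antiRamsey_completeGraph_triangle_general (n : ℕ) :
    antiRamsey (⊤ : SimpleGraph (Fin n)) 3 = n - 1 := by
  refine antiRamsey_eq_of_isGreatest ⟨⟨maxColoring Fin.val, ?_, ncolors_maxColoring_val n⟩, ?_⟩
  · exact not_hasRainbowClique_maxColoring _ _ le_rfl
  · rintro m ⟨c, hc, rfl⟩
    simpa using ncolors_le_card_sub_one hc

/-- Erdős–Simonovits–Sós: for all `n ≥ 3`, `ar(K_n, K_3) = n - 1`. -/
theorem antiRamsey_completeGraph_triangle (n : ℕ) (hn : 3 ≤ n) :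
    antiRamsey (⊤ : SimpleGraph (Fin n)) 3 = n - 1 :=
  antiRamsey_completeGraph_triangle_general n
end
end

section
/- For all n ≥ k ≥ 4, ar(K_n, K_k) = ex(K_n, K_{k−1}) + 1, where ex(K_n, K_{k−1}) is the maximum number of edges of a subgraph of K_n with no copy of K_{k−1}. -/
open Classical

noncomputable section

/-- The Turán number `ex(K_n, K_m)`: the maximum number of edges of a
`K_m`-free subgraph of `K_n`. -/
noncomputable def exNum (n m : ℕ) : ℕ :=
  sSup {e | ∃ H : SimpleGraph (Fin n), H.CliqueFree m ∧ H.edgeSet.ncard = e}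


def tS (r : ℕ) : ℕ → ℕ
  | 0 => 0
  | n+1 => tS r n + n / r

def tF (r : ℕ) : ℕ → ℕ
  | 0 => 0
  | n+1 => tF r n + (n - n / r)

lemma tF_twice (r : ℕ) : ∀ n, 2 * tF r n + 2 * tS r n + n = n * n := by
  intro n
  induction n with
  | zero => simp [tF, tS]
  | succ n ih =>
    have hd : n / r ≤ n := Nat.div_le_self n r
    simp only [tF, tS]
    zify [hd] at ih ⊢
    linear_combination ih

lemma tS_formula (r : ℕ) (hr : 1 ≤ r) :
    ∀ n, 2 * tS r n + r * (n / r) = r * (n / r) * (n / r) + 2 * (n % r) * (n / r) := by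
  intro n
  induction n with
  | zero => simp [tS]
  | succ n ih =>
    have hsr : n % r < r := Nat.mod_lt _ hr
    have hnd : r * (n / r) + n % r = n := Nat.div_add_mod n r
    by_cases hc : n % r + 1 < r
    · have h1 : (n+1) / r = n / r ∧ (n+1) % r = n % r + 1 := by
        rw [Nat.div_mod_unique hr]
        exact ⟨by omega, hc⟩
      simp only [tS, h1.1, h1.2]
      zify at ih ⊢
      linear_combination ih
    · have hc' : n % r + 1 = r := by omega
      have hrq : r * (n / r + 1) = r * (n / r) + r := by ring
      have h1 : (n+1) / r = n / r + 1 ∧ (n+1) % r = 0 := by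
        rw [Nat.div_mod_unique hr]
        exact ⟨by omega, by omega⟩
      simp only [tS, h1.1, h1.2]
      zify at ih hc' ⊢
      linear_combination ih + 2 * (n / r : ℤ) * hc'

/-- the key inequality: `N* ≥ 3` -/
lemma keyT (r m : ℕ) (hr : 2 ≤ r) (hm : r + 3 ≤ m) :
    m * tF r (m - 1) + 3 ≤ (m - 2) * tF r m + m := by
  obtain ⟨u, rfl⟩ : ∃ u, m = u + 1 := ⟨m - 1, by omega⟩
  have hu : r + 2 ≤ u := by omega
  have hq1 : 1 ≤ u / r := (Nat.one_le_div_iff (by omega)).2 (by omega)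
  have hd : u / r ≤ u := Nat.div_le_self u r
  have hsr : u % r < r := Nat.mod_lt _ (by omega)
  have hnd : r * (u / r) + u % r = u := Nat.div_add_mod u r
  have hcase : 1 ≤ u % r ∨ 2 ≤ u / r := by
    rcases Nat.eq_zero_or_pos (u % r) with h | h
    · right
      by_contra hq2
      have h1 : u / r = 1 := by omega
      rw [h1, Nat.mul_one] at hnd
      omega
    · left; exact h
  have htw := tF_twice r u
  have hform := tS_formula r (by omega) u
  have hstep : tF r (u + 1) = tF r u + (u - u / r) := rfl
  have hm2 : u + 1 - 2 = u - 1 := by omega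
  have hm1 : u + 1 - 1 = u := by omega
  rw [hstep, hm2, hm1]
  -- generalize
  obtain ⟨Q, hQ⟩ : ∃ Q, u / r = Q := ⟨_, rfl⟩
  obtain ⟨Sm, hSm⟩ : ∃ Sm, u % r = Sm := ⟨_, rfl⟩
  obtain ⟨A, hA⟩ : ∃ A, tF r u = A := ⟨_, rfl⟩
  obtain ⟨T, hT⟩ : ∃ T, tS r u = T := ⟨_, rfl⟩
  simp only [hQ, hSm, hA, hT] at htw hform hnd hcase hsr hq1 hd ⊢
  have hkey : 2 ≤ Sm * Q + Q + Sm := by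
    rcases hcase with h | h
    · have : Q ≤ Sm * Q := Nat.le_mul_of_pos_left Q h
      omega
    · omega
  have hu1 : 1 ≤ u := by omega
  zify [hd, hu1] at htw hform hnd hkey ⊢
  nlinarith [htw, hform, hnd, hkey, sq_nonneg ((u:ℤ) - Q)]

open Finset

/-- nondiagonal pairs inside `S` -/
def DD {N : ℕ} (S : Finset (Fin N)) : Finset (Sym2 (Fin N)) :=
  S.sym2.filter (fun e => ¬ e.IsDiag)

lemma mem_DD {N : ℕ} {S : Finset (Fin N)} {e : Sym2 (Fin N)} :
    e ∈ DD S ↔ (∀ a ∈ e, a ∈ S) ∧ ¬ e.IsDiag := by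
  simp [DD, Finset.mem_filter, Finset.mem_sym2_iff]

lemma mk_mem_DD {N : ℕ} {S : Finset (Fin N)} {x y : Fin N} :
    s(x, y) ∈ DD S ↔ x ∈ S ∧ y ∈ S ∧ x ≠ y := by
  rw [mem_DD]
  constructor
  · rintro ⟨h1, h2⟩
    exact ⟨h1 x (by simp), h1 y (by simp), by simpa using h2⟩
  · rintro ⟨h1, h2, h3⟩
    refine ⟨?_, by simpa using h3⟩
    intro a ha
    rcases Sym2.mem_iff.1 ha with rfl | rfl <;> assumption

lemma DD_mono {N : ℕ} {S T : Finset (Fin N)} (h : T ⊆ S) : DD T ⊆ DD S := by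
  intro e he
  rw [mem_DD] at he ⊢
  exact ⟨fun a ha => h (he.1 a ha), he.2⟩

lemma card_DD {N : ℕ} (S : Finset (Fin N)) : 2 * (DD S).card + S.card = S.card * S.card := by
  induction S using Finset.induction with
  | empty => simp [DD]
  | @insert a S ha ih =>
    have hins : DD (insert a S) = DD S ∪ S.image (fun b => s(a, b)) := by
      ext e
      constructor
      · intro he
        rw [mem_DD] at he
        induction e using Sym2.inductionOn with
        | _ x y =>
          have hx := he.1 x (by simp)
          have hy := he.1 y (by simp)
          have hxy : x ≠ y := by simpa using he.2
          simp only [Finset.mem_insert] at hx hy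
          rcases hx with rfl | hx
          · rcases hy with rfl | hy
            · exact absurd rfl hxy
            · exact Finset.mem_union_right _ (Finset.mem_image.2 ⟨y, hy, rfl⟩)
          · rcases hy with rfl | hy
            · refine Finset.mem_union_right _ (Finset.mem_image.2 ⟨x, hx, ?_⟩)
              exact Sym2.eq_swap
            · exact Finset.mem_union_left _ (mk_mem_DD.2 ⟨hx, hy, hxy⟩)
      · intro he
        rcases Finset.mem_union.1 he with he | he
        · exact DD_mono (Finset.subset_insert a S) he
        · rcases Finset.mem_image.1 he with ⟨b, hb, rfl⟩
          refine mk_mem_DD.2 ⟨Finset.mem_insert_self a S, Finset.mem_insert_of_mem hb, ?_⟩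
          rintro rfl; exact ha hb
    have hdisj : Disjoint (DD S) (S.image (fun b => s(a, b))) := by
      rw [Finset.disjoint_right]
      rintro e he hc
      rcases Finset.mem_image.1 he with ⟨b, hb, rfl⟩
      have := (mk_mem_DD.1 hc).1
      exact ha this
    have hinj : Set.InjOn (fun b => s(a, b)) S := by
      intro b1 _ b2 _ h
      exact Sym2.congr_right.1 h
    have hcardim : (S.image (fun b => s(a, b))).card = S.card := Finset.card_image_of_injOn hinj
    rw [hins, Finset.card_union_of_disjoint hdisj, hcardim, Finset.card_insert_of_notMem ha]
    have hc : S.card = S.card := rfl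
    zify at ih ⊢
    push_cast at ih ⊢
    linear_combination ih

lemma tS_of_le {r n : ℕ} (h : n ≤ r) : tS r n = 0 := by
  induction n with
  | zero => rfl
  | succ n ih =>
    have h1 : tS r n = 0 := ih (by omega)
    have h2 : n / r = 0 := Nat.div_eq_of_lt (by omega)
    simp [tS, h1, h2]

lemma tF_base {r : ℕ} (hr : 2 ≤ r) :
    2 * tF r (r + 2) + 4 + (r + 2) = (r + 2) * (r + 2) := by
  have htw := tF_twice r (r + 2)
  have h0 : tS r r = 0 := tS_of_le le_rfl
  have h1 : r / r = 1 := Nat.div_self (by omega)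
  have h2 : (r + 1) / r = 1 := by
    rw [show r + 1 = 1 + r * 1 by ring, Nat.add_mul_div_left _ _ (show 0 < r by omega),
      Nat.div_eq_of_lt (by omega)]
  have h3 : tS r (r + 2) = 2 := by
    have hu : tS r (r + 2) = tS r r + r / r + (r + 1) / r := rfl
    rw [hu, h0, h1, h2]
  rw [h3] at htw
  obtain ⟨W, hW⟩ : ∃ W, (r + 2) * (r + 2) = W := ⟨_, rfl⟩
  rw [hW] at htw ⊢
  omega

lemma keyT' (r m : ℕ) (hr : 2 ≤ r) (hm : r + 2 ≤ m) :
    (m + 1) * tF r m + 3 ≤ (m - 1) * tF r (m + 1) + (m + 1) := by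
  have h := keyT r (m + 1) hr (by omega)
  rw [show m + 1 - 1 = m by omega, show m + 1 - 2 = m - 1 by omega] at h
  exact h

lemma mainU {N : ℕ} (r : ℕ) (hr : 2 ≤ r) (c : Sym2 (Fin N) → ℕ) :
    ∀ m, r + 2 ≤ m → ∀ S : Finset (Fin N), S.card = m →
      tF r m + 2 ≤ ((DD S).image c).card →
      ∃ T, T ⊆ S ∧ T.card = r + 2 ∧ Set.InjOn c ↑(DD T) := by
  intro m hm
  induction m, hm using Nat.le_induction with
  | base =>
    intro S hS hbound
    refine ⟨S, Finset.Subset.refl S, hS, ?_⟩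
    have h1 : ((DD S).image c).card ≤ (DD S).card := Finset.card_image_le
    have h2 := card_DD S
    have h3 := tF_base hr
    rw [hS] at h2
    obtain ⟨W, hW⟩ : ∃ W, (r + 2) * (r + 2) = W := ⟨_, rfl⟩
    rw [hW] at h2 h3
    have h4 : ((DD S).image c).card = (DD S).card := by omega
    exact Finset.card_image_iff.1 h4
  | succ m hm ih =>
    intro S hS hbound
    by_contra hno
    push_neg at hno
    set CS := (DD S).image c with hCS
    set t := CS.card with ht
    -- ownership predicate
    set P : Fin N → ℕ → Prop := fun v α => ∀ e ∈ DD S, c e = α → v ∈ e with hP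
    -- Step A
    have stepA : ∀ v ∈ S, t ≤ (CS.filter (fun α => P v α)).card + (tF r m + 1) := by
      intro v hv
      have hsub : CS ⊆ CS.filter (fun α => P v α) ∪ (DD (S.erase v)).image c := by
        intro α hα
        by_cases hp : P v α
        · exact Finset.mem_union_left _ (Finset.mem_filter.2 ⟨hα, hp⟩)
        · simp only [hP, not_forall] at hp
          obtain ⟨e, he, hce, hve⟩ := hp
          refine Finset.mem_union_right _ (Finset.mem_image.2 ⟨e, ?_, hce⟩)
          rw [mem_DD] at he ⊢
          refine ⟨fun a ha => Finset.mem_erase.2 ⟨?_, he.1 a ha⟩, he.2⟩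
          rintro rfl; exact hve ha
      have herase : ((DD (S.erase v)).image c).card ≤ tF r m + 1 := by
        by_contra hbig
        push_neg at hbig
        obtain ⟨T, hT1, hT2, hT3⟩ := ih (S.erase v)
          (by simp [Finset.card_erase_of_mem hv, hS]) (by omega)
        exact hno T (hT1.trans (Finset.erase_subset v S)) hT2 hT3
      calc t ≤ (CS.filter (fun α => P v α) ∪ (DD (S.erase v)).image c).card :=
            Finset.card_le_card hsub
        _ ≤ (CS.filter (fun α => P v α)).card + ((DD (S.erase v)).image c).card :=
            Finset.card_union_le _ _
        _ ≤ _ := by omega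
    -- Step B : double counting
    have stepB : ∑ v ∈ S, (CS.filter (fun α => P v α)).card
        = ∑ α ∈ CS, (S.filter (fun v => P v α)).card := by
      simp only [Finset.card_filter]
      exact Finset.sum_comm
    -- nonsingleton color classes
    set NS : Finset ℕ := CS.filter
      (fun α => ∃ e ∈ DD S, ∃ e' ∈ DD S, c e = α ∧ c e' = α ∧ e ≠ e') with hNS
    have hNSsub : NS ⊆ CS := Finset.filter_subset _ _
    -- C1 : each color is owned by at most 2 vertices
    have C1 : ∀ α ∈ CS, (S.filter (fun v => P v α)).card ≤ 2 := by
      intro α hα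
      obtain ⟨e, he, hce⟩ := Finset.mem_image.1 hα
      revert he hce
      induction e using Sym2.inductionOn with
      | _ x y =>
        intro he hce
        have hsub : S.filter (fun v => P v α) ⊆ {x, y} := by
          intro v hv
          have hPv : P v α := (Finset.mem_filter.1 hv).2
          have := hPv _ he hce
          rcases Sym2.mem_iff.1 this with rfl | rfl <;> simp
        calc (S.filter (fun v => P v α)).card ≤ ({x, y} : Finset (Fin N)).card :=
              Finset.card_le_card hsub
          _ ≤ 2 := Finset.card_insert_le x {y} |>.trans (by simp)
    -- C2 : nonsingleton colors are owned by at most 1 vertex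
    have C2 : ∀ α ∈ NS, (S.filter (fun v => P v α)).card ≤ 1 := by
      intro α hα
      obtain ⟨-, e, he, e', he', hce, hce', hne⟩ := Finset.mem_filter.1 hα
      rw [Finset.card_le_one]
      intro v hv w hw
      have hPv : P v α := (Finset.mem_filter.1 hv).2
      have hPw : P w α := (Finset.mem_filter.1 hw).2
      by_contra hvw
      have h1 : e = s(v, w) := (Sym2.mem_and_mem_iff hvw).1 ⟨hPv _ he hce, hPw _ he hce⟩
      have h2 : e' = s(v, w) := (Sym2.mem_and_mem_iff hvw).1 ⟨hPv _ he' hce', hPw _ he' hce'⟩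
      exact hne (h1.trans h2.symm)
    -- Step D
    have hNScard : ∑ α ∈ CS, (if α ∈ NS then 1 else 0) = NS.card := by
      rw [← Finset.card_filter]
      congr 1
      ext α
      simp only [Finset.mem_filter]
      exact ⟨fun h => h.2, fun h => ⟨hNSsub h, h⟩⟩
    have stepD : (∑ α ∈ CS, (S.filter (fun v => P v α)).card) + NS.card ≤ 2 * t := by
      have hpt : ∀ α ∈ CS,
          (S.filter (fun v => P v α)).card + (if α ∈ NS then 1 else 0) ≤ 2 := by
        intro α hα
        by_cases hns : α ∈ NS
        · have := C2 α hns; simp only [hns, if_true]; omega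
        · simp only [hns, if_false, add_zero]; exact C1 α hα
      calc (∑ α ∈ CS, (S.filter (fun v => P v α)).card) + NS.card
          = ∑ α ∈ CS, ((S.filter (fun v => P v α)).card + (if α ∈ NS then 1 else 0)) := by
            rw [Finset.sum_add_distrib, hNScard]
        _ ≤ ∑ _α ∈ CS, 2 := Finset.sum_le_sum hpt
        _ = 2 * t := by rw [Finset.sum_const, ht, smul_eq_mul, mul_comm]
    -- linear extraction
    set SumOwn := ∑ α ∈ CS, (S.filter (fun v => P v α)).card with hSumOwn
    have h1 : (m - 1) * t + 2 * t ≤ SumOwn + (m + 1) * tF r m + (m + 1) := by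
      have hsum : (m + 1) * t ≤ SumOwn + (m + 1) * (tF r m + 1) := by
        calc (m + 1) * t = ∑ _v ∈ S, t := by rw [Finset.sum_const, hS, smul_eq_mul]
          _ ≤ ∑ v ∈ S, ((CS.filter (fun α => P v α)).card + (tF r m + 1)) :=
              Finset.sum_le_sum stepA
          _ = SumOwn + (m + 1) * (tF r m + 1) := by
              rw [Finset.sum_add_distrib, stepB, Finset.sum_const, hS, smul_eq_mul]
      have e1 : (m + 1) * (tF r m + 1) = (m + 1) * tF r m + (m + 1) := by ring
      have e2 : (m + 1) * t = (m - 1) * t + 2 * t := by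
        rw [show m + 1 = m - 1 + 2 by omega, add_mul]
      omega
    have hkey := keyT' r m hr hm
    have h4 : (m - 1) * tF r (m + 1) + (m - 1) * 2 ≤ (m - 1) * t := by
      calc (m - 1) * tF r (m + 1) + (m - 1) * 2 = (m - 1) * (tF r (m + 1) + 2) := by ring
        _ ≤ (m - 1) * t := Nat.mul_le_mul_left _ hbound
    have hm4 : 4 ≤ m := by omega
    have hj : NS.card ≤ 1 := by omega
    -- now split on the number of nonsingleton colors
    rcases Nat.lt_or_ge NS.card 1 with hj0 | hj1
    · -- no nonsingleton colors : c is injective on DD S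
      have hNS0 : NS = ∅ := Finset.card_eq_zero.1 (by omega)
      have hinj : Set.InjOn c ↑(DD S) := by
        intro e he e' he' hcc
        by_contra hne
        have : c e ∈ NS := by
          rw [hNS]
          exact Finset.mem_filter.2 ⟨Finset.mem_image.2 ⟨e, he, rfl⟩,
            e, he, e', he', rfl, hcc.symm, hne⟩
        rw [hNS0] at this
        exact absurd this (Finset.notMem_empty _)
      obtain ⟨T, hT1, hT2⟩ := Finset.exists_subset_card_eq (show r + 2 ≤ S.card by omega)
      exact hno T hT1 hT2 (hinj.mono (Finset.coe_subset.2 (DD_mono hT1)))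
    · -- exactly one nonsingleton color α₀
      have hj1' : NS.card = 1 := le_antisymm hj hj1
      obtain ⟨α₀, hα₀⟩ := Finset.card_eq_one.1 hj1'
      have hα₀NS : α₀ ∈ NS := by rw [hα₀]; exact Finset.mem_singleton_self _
      have hα₀CS : α₀ ∈ CS := hNSsub hα₀NS
      -- the owner count of α₀ is at least 1
      have hw : 1 ≤ (S.filter (fun v => P v α₀)).card := by
        have hsplit : SumOwn = (∑ α ∈ CS.erase α₀, (S.filter (fun v => P v α)).card)
            + (S.filter (fun v => P v α₀)).card := by
          rw [hSumOwn, ← Finset.sum_erase_add _ _ hα₀CS]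
        have herle : (∑ α ∈ CS.erase α₀, (S.filter (fun v => P v α)).card)
            ≤ 2 * (t - 1) := by
          calc (∑ α ∈ CS.erase α₀, (S.filter (fun v => P v α)).card)
              ≤ ∑ _α ∈ CS.erase α₀, 2 :=
                Finset.sum_le_sum (fun α hα => C1 α (Finset.mem_of_mem_erase hα))
            _ = 2 * (t - 1) := by
                rw [Finset.sum_const, Finset.card_erase_of_mem hα₀CS, smul_eq_mul, ht,
                  mul_comm]
        have htpos : 1 ≤ t := by omega
        omega
      obtain ⟨u, hu⟩ := Finset.card_pos.1 (by omega : 0 < (S.filter (fun v => P v α₀)).card)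
      have hPu : P u α₀ := (Finset.mem_filter.1 hu).2
      have huS : u ∈ S := (Finset.mem_filter.1 hu).1
      -- c is injective on DD (S.erase u)
      have hinj : Set.InjOn c ↑(DD (S.erase u)) := by
        intro e he e' he' hcc
        by_contra hne
        have heS : e ∈ DD S := DD_mono (Finset.erase_subset u S) (by exact he)
        have heS' : e' ∈ DD S := DD_mono (Finset.erase_subset u S) (by exact he')
        have hcNS : c e ∈ NS := by
          rw [hNS]
          exact Finset.mem_filter.2 ⟨Finset.mem_image.2 ⟨e, heS, rfl⟩,
            e, heS, e', heS', rfl, hcc.symm, hne⟩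
        have hceq : c e = α₀ := by rw [hα₀] at hcNS; exact Finset.mem_singleton.1 hcNS
        have hue : u ∈ e := hPu e heS hceq
        have : ∀ a ∈ e, a ∈ S.erase u := (mem_DD.1 (by exact he)).1
        exact absurd (Finset.mem_erase.1 (this u hue)).1 (by simp)
      have hcer : r + 2 ≤ (S.erase u).card := by
        rw [Finset.card_erase_of_mem huS, hS]; omega
      obtain ⟨T, hT1, hT2⟩ := Finset.exists_subset_card_eq hcer
      exact hno T (hT1.trans (Finset.erase_subset u S)) hT2
        (hinj.mono (Finset.coe_subset.2 (DD_mono hT1)))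

/-- number of `x < n` with `x ≡ j (mod r)` -/
def cntN (r n j : ℕ) : ℕ := ((Finset.range n).filter (fun x => j = x % r)).card

lemma count_mod (r n : ℕ) (hr : 1 ≤ r) : cntN r n (n % r) = n / r := by
  have h : (Finset.range n).filter (fun x => n % r = x % r)
      = (Finset.range (n / r)).image (fun i => n % r + i * r) := by
    ext x
    simp only [Finset.mem_filter, Finset.mem_range, Finset.mem_image]
    constructor
    · rintro ⟨hx, hmod⟩
      have h1 : r * (x / r) + x % r = x := Nat.div_add_mod x r
      have h2 : r * (n / r) + n % r = n := Nat.div_add_mod n r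
      have hc1 : x / r * r = r * (x / r) := Nat.mul_comm _ _
      rw [← hmod] at h1
      refine ⟨x / r, ?_, by omega⟩
      by_contra hge
      push_neg at hge
      have := Nat.mul_le_mul_left r hge
      omega
    · rintro ⟨i, hi, rfl⟩
      have h2 : r * (n / r) + n % r = n := Nat.div_add_mod n r
      have h3 : i + 1 ≤ n / r := hi
      have h4 := Nat.mul_le_mul_left r h3
      have hc1 : r * (i + 1) = r * i + r := by ring
      have hc2 : i * r = r * i := Nat.mul_comm _ _
      have hmod : (n % r + i * r) % r = n % r := by
        rw [Nat.add_mul_mod_self_right]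
        exact Nat.mod_eq_of_lt (Nat.mod_lt _ hr)
      exact ⟨by omega, hmod.symm⟩
  have hinj : Set.InjOn (fun i => n % r + i * r) ↑(Finset.range (n / r)) := by
    intro i _ j _ hij
    simp only at hij
    have : i * r = j * r := by omega
    exact Nat.eq_of_mul_eq_mul_right (by omega) this
  rw [cntN, h, Finset.card_image_of_injOn hinj, Finset.card_range]

lemma sumCnt (r : ℕ) (hr : 1 ≤ r) :
    ∀ n, (∑ x ∈ Finset.range n, cntN r n (x % r)) + 2 * tF r n = n * n := by
  intro n
  induction n with
  | zero => simp [tF]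
  | succ n ih =>
    have hins : ∀ j, cntN r (n+1) j = cntN r n j + (if j = n % r then 1 else 0) := by
      intro j
      rw [cntN, cntN, Finset.range_add_one, Finset.filter_insert]
      by_cases hj : j = n % r
      · rw [if_pos hj, if_pos hj, Finset.card_insert_of_notMem (by simp)]
      · rw [if_neg hj, if_neg hj, add_zero]
    have hsplit : (∑ x ∈ Finset.range (n+1), cntN r (n+1) (x % r))
        = (∑ x ∈ Finset.range n, cntN r n (x % r)) + 2 * (n / r) + 1 := by
      rw [Finset.range_add_one, Finset.sum_insert (by simp)]
      have h1 : cntN r (n+1) (n % r) = n / r + 1 := by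
        rw [hins, if_pos rfl, count_mod r n hr]
      have h2 : (∑ x ∈ Finset.range n, cntN r (n+1) (x % r))
          = (∑ x ∈ Finset.range n, cntN r n (x % r)) + n / r := by
        rw [← count_mod r n hr, cntN, Finset.card_filter, ← Finset.sum_add_distrib]
        apply Finset.sum_congr rfl
        intro x hx
        rw [hins]
        by_cases hxr : x % r = n % r
        · rw [if_pos hxr, if_pos hxr.symm]
        · rw [if_neg hxr, if_neg (fun h => hxr h.symm), add_zero]
      rw [h1, h2]
      ring
    rw [hsplit]
    have hd : n / r ≤ n := Nat.div_le_self n r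
    have hstep : tF r (n+1) = tF r n + (n - n / r) := rfl
    rw [hstep]
    zify [hd] at ih ⊢
    linear_combination ih

open SimpleGraph

lemma turan_card_edges (n r : ℕ) (hr : 1 ≤ r) :
    (turanGraph n r).edgeFinset.card = tF r n := by
  have hdeg : ∀ v : Fin n,
      (turanGraph n r).degree v
        + (Finset.univ.filter (fun w : Fin n => (v : ℕ) % r = (w : ℕ) % r)).card = n := by
    intro v
    rw [← SimpleGraph.card_neighborFinset_eq_degree, neighborFinset_eq_filter]
    have hfe : Finset.univ.filter (fun w => (turanGraph n r).Adj v w)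
        = Finset.univ.filter (fun w : Fin n => ¬ ((v : ℕ) % r = (w : ℕ) % r)) := by
      apply Finset.filter_congr
      intro w _
      exact Iff.rfl
    rw [hfe, add_comm]
    have := Finset.card_filter_add_card_filter_not
      (s := (Finset.univ : Finset (Fin n)))
      (p := fun w : Fin n => (v : ℕ) % r = (w : ℕ) % r)
    simpa using this
  have hcnt : ∀ v : Fin n,
      (Finset.univ.filter (fun w : Fin n => (v : ℕ) % r = (w : ℕ) % r)).card
        = cntN r n ((v : ℕ) % r) := by
    intro v
    rw [Finset.card_filter, cntN, Finset.card_filter]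
    exact Fin.sum_univ_eq_sum_range (fun x => if (v : ℕ) % r = x % r then 1 else 0) n
  have hsum := SimpleGraph.sum_degrees_eq_twice_card_edges (turanGraph n r)
  have htot : (∑ v : Fin n, (turanGraph n r).degree v)
      + (∑ x ∈ Finset.range n, cntN r n (x % r)) = n * n := by
    have h1 : (∑ v : Fin n, ((turanGraph n r).degree v
        + (Finset.univ.filter (fun w : Fin n => (v : ℕ) % r = (w : ℕ) % r)).card)) = n * n := by
      rw [Finset.sum_congr rfl (fun v _ => hdeg v), Finset.sum_const, Finset.card_univ,
        Fintype.card_fin, smul_eq_mul]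
    rw [Finset.sum_add_distrib] at h1
    rw [← h1]
    congr 1
    rw [Finset.sum_congr rfl (fun v _ => hcnt v)]
    exact (Fin.sum_univ_eq_sum_range (fun x => cntN r n (x % r)) n).symm
  have hsc := sumCnt r hr n
  obtain ⟨W, hW⟩ : ∃ W, n * n = W := ⟨_, rfl⟩
  rw [hW] at htot hsc
  omega

open SimpleGraph

lemma sym2_exists_rep {α : Type*} (e : Sym2 α) : ∃ x y, e = s(x, y) :=
  Sym2.inductionOn e (fun x y => ⟨x, y, rfl⟩)

lemma DD_univ (n : ℕ) :
    DD (Finset.univ : Finset (Fin n)) = (⊤ : SimpleGraph (Fin n)).edgeFinset := by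
  ext e
  rw [mem_DD, SimpleGraph.mem_edgeFinset, SimpleGraph.edgeSet_top]
  simp

lemma ncolors_eq (n : ℕ) (c : Sym2 (Fin n) → ℕ) :
    ncolors (⊤ : SimpleGraph (Fin n)) c
      = ((DD (Finset.univ : Finset (Fin n))).image c).card := by
  rw [ncolors, ← SimpleGraph.coe_edgeFinset, ← Finset.coe_image, Set.ncard_coe_finset, DD_univ]

lemma construction {n r : ℕ} (hr : 2 ≤ r) (hn : r + 2 ≤ n) (H₀ : SimpleGraph (Fin n))
    (hcf : H₀.CliqueFree (r + 1)) :
    ∃ c : Sym2 (Fin n) → ℕ, ¬ HasRainbowClique (⊤ : SimpleGraph (Fin n)) c (r + 2) ∧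
      ncolors (⊤ : SimpleGraph (Fin n)) c = H₀.edgeFinset.card + 1 := by
  set enc : Sym2 (Fin n) → ℕ := fun e => ((Fintype.equivFin (Sym2 (Fin n))) e : ℕ) with henc
  have hencinj : Function.Injective enc := fun a b h =>
    (Fintype.equivFin (Sym2 (Fin n))).injective (Fin.val_injective h)
  set c : Sym2 (Fin n) → ℕ := fun e => if e ∈ H₀.edgeFinset then enc e + 1 else 0 with hc
  refine ⟨c, ?_, ?_⟩
  · rintro ⟨S, hScard, hSadj, hScol⟩
    set M : Finset (Sym2 (Fin n)) := (DD S).filter (fun e => e ∉ H₀.edgeFinset) with hM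
    have hM1 : ∀ e ∈ M, ∀ e' ∈ M, e = e' := by
      intro e he e' he'
      obtain ⟨x, y, rfl⟩ := sym2_exists_rep e
      obtain ⟨z, w, rfl⟩ := sym2_exists_rep e'
      obtain ⟨heD, heH⟩ := Finset.mem_filter.1 he
      obtain ⟨heD', heH'⟩ := Finset.mem_filter.1 he'
      obtain ⟨hx, hy, hxy⟩ := mk_mem_DD.1 heD
      obtain ⟨hz, hw, hzw⟩ := mk_mem_DD.1 heD'
      apply hScol x hx y hy z hz w hw hxy hzw
      simp only [hc, if_neg heH, if_neg heH']
    have key : ∃ a, a ∈ S ∧ ∀ x ∈ S.erase a, ∀ y ∈ S.erase a, x ≠ y → H₀.Adj x y := by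
      rcases Finset.eq_empty_or_nonempty M with hMe | ⟨estar, hestar⟩
      · have hSne : S.Nonempty := Finset.card_pos.1 (by omega)
        obtain ⟨a, ha⟩ := hSne
        refine ⟨a, ha, ?_⟩
        intro x hx y hy hxy
        have hmem : s(x, y) ∈ DD S := mk_mem_DD.2
          ⟨Finset.mem_of_mem_erase hx, Finset.mem_of_mem_erase hy, hxy⟩
        by_contra hadj
        have hsM : s(x, y) ∈ M := Finset.mem_filter.2 ⟨hmem, fun hme =>
          hadj ((SimpleGraph.mem_edgeSet _).1 (SimpleGraph.mem_edgeFinset.1 hme))⟩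
        rw [hMe] at hsM
        exact absurd hsM (Finset.notMem_empty _)
      · obtain ⟨p, q, hpq'⟩ := sym2_exists_rep estar
        rw [hpq'] at hestar
        obtain ⟨hpD, hpH⟩ := Finset.mem_filter.1 hestar
        obtain ⟨hp, hq, hpq⟩ := mk_mem_DD.1 hpD
        refine ⟨p, hp, ?_⟩
        intro x hx y hy hxy
        have hmem : s(x, y) ∈ DD S := mk_mem_DD.2
          ⟨Finset.mem_of_mem_erase hx, Finset.mem_of_mem_erase hy, hxy⟩
        by_contra hadj
        have hsM : s(x, y) ∈ M := Finset.mem_filter.2 ⟨hmem, fun hme =>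
          hadj ((SimpleGraph.mem_edgeSet _).1 (SimpleGraph.mem_edgeFinset.1 hme))⟩
        have heq : s(x, y) = s(p, q) := hM1 _ hsM _ hestar
        have hpin : p ∈ s(x, y) := by rw [heq]; simp
        rcases Sym2.mem_iff.1 hpin with rfl | rfl
        · exact (Finset.mem_erase.1 hx).1 rfl
        · exact (Finset.mem_erase.1 hy).1 rfl
    obtain ⟨a, haS, hclq⟩ := key
    refine hcf (S.erase a) ⟨?_, ?_⟩
    · intro x hx y hy hxy
      exact hclq x (Finset.mem_coe.1 hx) y (Finset.mem_coe.1 hy) hxy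
    · rw [Finset.card_erase_of_mem haS, hScard]
      omega
  · rw [ncolors_eq, DD_univ]
    have himg : (⊤ : SimpleGraph (Fin n)).edgeFinset.image c
        = insert 0 (H₀.edgeFinset.image (fun e => enc e + 1)) := by
      apply Finset.Subset.antisymm
      · intro β hβ
        obtain ⟨e, he, rfl⟩ := Finset.mem_image.1 hβ
        by_cases heH : e ∈ H₀.edgeFinset
        · exact Finset.mem_insert_of_mem (Finset.mem_image.2 ⟨e, heH,
            by simp only [hc]; rw [if_pos heH]⟩)
        · have : c e = 0 := by simp only [hc]; rw [if_neg heH]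
          rw [this]
          exact Finset.mem_insert_self 0 _
      · intro β hβ
        rcases Finset.mem_insert.1 hβ with rfl | hβ
        · have htop : ¬ (⊤ : SimpleGraph (Fin n)).CliqueFree (r + 1) := by
            intro hcf'
            obtain ⟨T, hT1, hT2⟩ := Finset.exists_subset_card_eq
              (show r + 1 ≤ (Finset.univ : Finset (Fin n)).card by
                rw [Finset.card_univ, Fintype.card_fin]; omega)
            exact hcf' T ⟨fun x _ y _ hxy => (SimpleGraph.top_adj x y).2 hxy, hT2⟩
          have hne : H₀ ≠ ⊤ := fun h => htop (h ▸ hcf)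
          have hlt : H₀ < ⊤ := lt_of_le_of_ne le_top hne
          obtain ⟨e₀, he₀T, he₀H⟩ := Finset.exists_of_ssubset
            (SimpleGraph.edgeFinset_ssubset_edgeFinset.2 hlt)
          exact Finset.mem_image.2 ⟨e₀, he₀T, by simp only [hc]; rw [if_neg he₀H]⟩
        · obtain ⟨e, heH, rfl⟩ := Finset.mem_image.1 hβ
          exact Finset.mem_image.2
            ⟨e, SimpleGraph.edgeFinset_mono le_top heH, by simp only [hc]; rw [if_pos heH]⟩
    rw [himg, Finset.card_insert_of_notMem (by simp),
      Finset.card_image_of_injOn (fun a _ b _ h => hencinj (by omega))]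

/-- Schiermeyer: for all `n ≥ k ≥ 4`, `ar(K_n, K_k) = ex(K_n, K_{k-1}) + 1`. -/
theorem antiRamsey_completeGraph_clique (n k : ℕ) (hk : 4 ≤ k) (hkn : k ≤ n) :
    antiRamsey (⊤ : SimpleGraph (Fin n)) k = exNum n (k - 1) + 1 := by
  obtain ⟨r, rfl⟩ : ∃ r, k = r + 2 := ⟨k - 2, by omega⟩
  have hr : 2 ≤ r := by omega
  have hk1 : r + 2 - 1 = r + 1 := by omega
  rw [hk1]
  have hBne : Set.Nonempty
      {e | ∃ H : SimpleGraph (Fin n), H.CliqueFree (r + 1) ∧ H.edgeSet.ncard = e} :=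
    ⟨0, ⊥, SimpleGraph.cliqueFree_bot (by omega),
      by rw [SimpleGraph.edgeSet_bot]; exact Set.ncard_empty _⟩
  have hBbdd : BddAbove
      {e | ∃ H : SimpleGraph (Fin n), H.CliqueFree (r + 1) ∧ H.edgeSet.ncard = e} := by
    refine ⟨Fintype.card (Sym2 (Fin n)), ?_⟩
    rintro e ⟨H, _, rfl⟩
    calc H.edgeSet.ncard ≤ (Set.univ : Set (Sym2 (Fin n))).ncard :=
          Set.ncard_le_ncard (Set.subset_univ _) Set.finite_univ
      _ = _ := by rw [Set.ncard_univ, Nat.card_eq_fintype_card]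
  have hXmem : exNum n (r + 1) ∈
      {e | ∃ H : SimpleGraph (Fin n), H.CliqueFree (r + 1) ∧ H.edgeSet.ncard = e} :=
    Nat.sSup_mem hBne hBbdd
  obtain ⟨H₀, hH₀cf, hH₀card⟩ := hXmem
  have hH₀fin : H₀.edgeFinset.card = exNum n (r + 1) := by
    rw [← hH₀card, ← Set.ncard_coe_finset, SimpleGraph.coe_edgeFinset]
  have hTuran : tF r n ≤ exNum n (r + 1) := by
    apply le_csSup hBbdd
    refine ⟨SimpleGraph.turanGraph n r, SimpleGraph.turanGraph_cliqueFree (by omega), ?_⟩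
    rw [← SimpleGraph.coe_edgeFinset, Set.ncard_coe_finset, turan_card_edges n r (by omega)]
  have hub : ∀ a ∈ {m | ∃ c : Sym2 (Fin n) → ℕ,
      ¬ HasRainbowClique (⊤ : SimpleGraph (Fin n)) c (r + 2) ∧
        ncolors (⊤ : SimpleGraph (Fin n)) c = m}, a ≤ exNum n (r + 1) + 1 := by
    rintro a ⟨c, hnr, rfl⟩
    by_contra hbig
    push_neg at hbig
    have hcard : tF r n + 2 ≤ ((DD (Finset.univ : Finset (Fin n))).image c).card := by
      rw [← ncolors_eq]; omega
    obtain ⟨T, hT1, hT2, hT3⟩ := mainU r hr c n (by omega) Finset.univ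
      (by rw [Finset.card_univ, Fintype.card_fin]) hcard
    apply hnr
    refine ⟨T, hT2, fun x _ y _ hxy => (SimpleGraph.top_adj x y).2 hxy, ?_⟩
    intro x hx y hy z hz w hw hxy hzw hcc
    exact hT3 (Finset.mem_coe.2 (mk_mem_DD.2 ⟨hx, hy, hxy⟩))
      (Finset.mem_coe.2 (mk_mem_DD.2 ⟨hz, hw, hzw⟩)) hcc
  have hmem : exNum n (r + 1) + 1 ∈ {m | ∃ c : Sym2 (Fin n) → ℕ,
      ¬ HasRainbowClique (⊤ : SimpleGraph (Fin n)) c (r + 2) ∧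
        ncolors (⊤ : SimpleGraph (Fin n)) c = m} := by
    obtain ⟨c, hc1, hc2⟩ := construction hr (by omega) H₀ hH₀cf
    exact ⟨c, hc1, by rw [hc2, hH₀fin]⟩
  rw [antiRamsey]
  exact le_antisymm (csSup_le ⟨_, hmem⟩ hub)
    (le_csSup ⟨exNum n (r + 1) + 1, fun a ha => hub a ha⟩ hmem)
end
end

section
/- Let G be an edge-colored graph with coloring c, let u and v be nonadjacent vertices of G with N_G(u) = N_G(v), and let c′ be the symmetrization of c at v to u. Then the number of colors satisfies c′(G) = c(G) − d^s(v) + d^s(u), where d^s(x) denotes the number of colors saturated by x (colors all of whose edges are incident to x) in the coloring c. -/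
/-!
Edges avoiding `v` keep their colors, and each edge `vx` takes the color of `ux` or its fresh
copy. Hence the colors of `c'` are the colors of `c` not saturated by `v` (such a color survives
on an edge avoiding `v`, and a color `c(ux)` not saturated by `u` is not saturated by `v` either,
since `ux` avoids `v`), together with the fresh copies of the colors saturated by `u`. These two
sets are disjoint and `σ` is injective on the colors saturated by `u`, so the count follows.
-/

open Classical

noncomputable section

/-- A color `a` is saturated by the vertex `x`: some edge has color `a` and every
edge of color `a` is incident to `x`. -/
def Saturates {V : Type*} (G : SimpleGraph V) (c : Sym2 V → ℕ) (x : V) (a : ℕ) : Prop :=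
  (∃ e ∈ G.edgeSet, c e = a) ∧ ∀ e ∈ G.edgeSet, c e = a → x ∈ e

/-- The set of colors saturated by `x`. -/
def satColors {V : Type*} (G : SimpleGraph V) (c : Sym2 V → ℕ) (x : V) : Set ℕ :=
  {a | Saturates G c x a}

/-- The saturated color degree `d^s(x)`. -/
noncomputable def satDegree {V : Type*} (G : SimpleGraph V) (c : Sym2 V → ℕ) (x : V) : ℕ :=
  (satColors G c x).ncard

/-- The symmetrization of the coloring `c` at `v` to `u`: every edge `vx` is recolored
by `c (ux)` if `c (ux)` is not saturated by `u`, and by the fresh color `σ (c (ux))`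
otherwise; all other edges keep their colors. -/
noncomputable def symmetrize {V : Type*} (G : SimpleGraph V) (c : Sym2 V → ℕ) (u v : V)
    (σ : ℕ → ℕ) : Sym2 V → ℕ :=
  fun e =>
    if h : e ∈ G.edgeSet ∧ v ∈ e then
      if Saturates G c u (c s(u, Sym2.Mem.other h.2)) then σ (c s(u, Sym2.Mem.other h.2))
      else c s(u, Sym2.Mem.other h.2)
    else c e

section Symmetrize

variable {V : Type*} {G : SimpleGraph V} {c : Sym2 V → ℕ}

theorem adj_iff_of_neighborSet_eq {u v : V} (hN : G.neighborSet u = G.neighborSet v) (x : V) :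
    G.Adj u x ↔ G.Adj v x :=
  Set.ext_iff.mp hN x

theorem satColors_subset_image (x : V) : satColors G c x ⊆ c '' G.edgeSet :=
  fun _ ha => ha.1

theorem exists_edge_not_mem_of_not_saturates {v : V} {a : ℕ} (ha : a ∈ c '' G.edgeSet)
    (hsat : ¬ Saturates G c v a) : ∃ e ∈ G.edgeSet, c e = a ∧ v ∉ e := by
  by_contra! h
  exact hsat ⟨ha, h⟩

theorem symmetrize_of_not_mem {u v : V} {σ : ℕ → ℕ} {e : Sym2 V} (hv : v ∉ e) :
    symmetrize G c u v σ e = c e :=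
  dif_neg fun h => hv h.2

theorem symmetrize_mk {u v x : V} {σ : ℕ → ℕ} (hvx : G.Adj v x) :
    symmetrize G c u v σ s(v, x) =
      if Saturates G c u (c s(u, x)) then σ (c s(u, x)) else c s(u, x) := by
  have hv : v ∈ s(v, x) := Sym2.mem_mk_left v x
  have hother : Sym2.Mem.other hv = x := Sym2.congr_right.mp (Sym2.other_spec hv)
  rw [symmetrize, dif_pos ⟨hvx, hv⟩, hother]

theorem image_symmetrize_subset {u v : V} (hN : G.neighborSet u = G.neighborSet v)
    (σ : ℕ → ℕ) :
    symmetrize G c u v σ '' G.edgeSet ⊆ (c '' G.edgeSet \ satColors G c v) ∪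
      σ '' satColors G c u := by
  rintro _ ⟨e, he, rfl⟩
  by_cases hv : v ∈ e
  · obtain ⟨x, rfl⟩ : ∃ x, e = s(v, x) := ⟨_, (Sym2.other_spec hv).symm⟩
    have hvx : G.Adj v x := he
    have hux : G.Adj u x := (adj_iff_of_neighborSet_eq hN x).mpr hvx
    rw [symmetrize_mk hvx]
    split_ifs with hsat
    · exact Or.inr ⟨_, hsat, rfl⟩
    refine Or.inl ⟨⟨_, hux, rfl⟩, fun hsatv => ?_⟩
    rcases Sym2.mem_iff.mp (hsatv.2 _ hux rfl) with rfl | rfl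
    · exact hsat hsatv
    · exact G.ne_of_adj hvx rfl
  · rw [symmetrize_of_not_mem hv]
    exact Or.inl ⟨⟨e, he, rfl⟩, fun hsatv => hv (hsatv.2 e he rfl)⟩

theorem subset_image_symmetrize {u v : V} (hN : G.neighborSet u = G.neighborSet v)
    (σ : ℕ → ℕ) :
    (c '' G.edgeSet \ satColors G c v) ∪ σ '' satColors G c u ⊆
      symmetrize G c u v σ '' G.edgeSet := by
  rintro _ (⟨ha, hsatv⟩ | ⟨a, hsat, rfl⟩)
  · obtain ⟨e, he, rfl, hv⟩ := exists_edge_not_mem_of_not_saturates ha hsatv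
    exact ⟨e, he, symmetrize_of_not_mem hv⟩
  · obtain ⟨e, he, rfl⟩ := hsat.1
    obtain ⟨x, rfl⟩ : ∃ x, e = s(u, x) := ⟨_, (Sym2.other_spec (hsat.2 e he rfl)).symm⟩
    have hvx : G.Adj v x := (adj_iff_of_neighborSet_eq hN x).mp he
    exact ⟨s(v, x), hvx, (symmetrize_mk hvx).trans (if_pos hsat)⟩

theorem image_symmetrize {u v : V} (hN : G.neighborSet u = G.neighborSet v) (σ : ℕ → ℕ) :
    symmetrize G c u v σ '' G.edgeSet =
      (c '' G.edgeSet \ satColors G c v) ∪ σ '' satColors G c u :=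
  (image_symmetrize_subset hN σ).antisymm (subset_image_symmetrize hN σ)

end Symmetrize

theorem ncolors_symmetrize_general {V : Type*} [Fintype V] (G : SimpleGraph V) (c : Sym2 V → ℕ)
    (u v : V) (hN : G.neighborSet u = G.neighborSet v)
    (σ : ℕ → ℕ) (hinj : Set.InjOn σ (satColors G c u))
    (hfresh : ∀ a ∈ satColors G c u, σ a ∉ c '' G.edgeSet) :
    (symmetrize G c u v σ '' G.edgeSet).ncard =
      (c '' G.edgeSet).ncard - satDegree G c v + satDegree G c u := by
  have hfin : (c '' G.edgeSet).Finite := Set.toFinite _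
  have hdisj : Disjoint (c '' G.edgeSet \ satColors G c v) (σ '' satColors G c u) :=
    Set.disjoint_left.mpr fun _ ha ⟨b, hb, hσb⟩ => hfresh b hb (hσb ▸ ha.1)
  rw [image_symmetrize hN, Set.ncard_union_eq hdisj hfin.sdiff
      ((hfin.subset (satColors_subset_image u)).image σ),
    Set.ncard_sdiff' (satColors_subset_image v) hfin, hinj.ncard_image]
  rfl

/-- Symmetrizing `c` at `v` to `u` changes the number of colors by
`- d^s(v) + d^s(u)`. -/
theorem ncolors_symmetrize {V : Type*} [Fintype V] (G : SimpleGraph V) (c : Sym2 V → ℕ)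
    (u v : V) (huv : ¬ G.Adj u v) (hne : u ≠ v) (hN : G.neighborSet u = G.neighborSet v)
    (σ : ℕ → ℕ) (hinj : Set.InjOn σ (satColors G c u))
    (hfresh : ∀ a ∈ satColors G c u, σ a ∉ c '' G.edgeSet) :
    (symmetrize G c u v σ '' G.edgeSet).ncard =
      (c '' G.edgeSet).ncard - satDegree G c v + satDegree G c u :=
  ncolors_symmetrize_general G c u v hN σ hinj hfresh
end
end

section
/- Let G be an edge-colored graph with coloring c, let u and v be nonadjacent with N_G(u) = N_G(v), and let c′ be the symmetrization of c at v to u. If G with coloring c′ contains a rainbow copy of K_k, then G with coloring c also contains a rainbow copy of K_k. -/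
open Classical

noncomputable section

lemma symmetrize_not_mem {V : Type*} (G : SimpleGraph V) (c : Sym2 V → ℕ) (u v : V)
    (σ : ℕ → ℕ) {e : Sym2 V} (hv : v ∉ e) : symmetrize G c u v σ e = c e := by
  unfold symmetrize
  rw [dif_neg]
  exact fun h => hv h.2

lemma symmetrize_adj {V : Type*} (G : SimpleGraph V) (c : Sym2 V → ℕ) (u v : V)
    (σ : ℕ → ℕ) {x : V} (h : G.Adj v x) :
    symmetrize G c u v σ s(v, x) =
      if Saturates G c u (c s(u, x)) then σ (c s(u, x)) else c s(u, x) := by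
  have he : s(v, x) ∈ G.edgeSet ∧ v ∈ s(v, x) := ⟨h, Sym2.mem_mk_left v x⟩
  have hother : Sym2.Mem.other he.2 = x := by
    have hs := Sym2.other_spec he.2
    rwa [Sym2.congr_right] at hs
  show (if h : s(v, x) ∈ G.edgeSet ∧ v ∈ s(v, x) then _ else _) = _
  rw [dif_pos he, hother]

/-- If the symmetrization of `c` at `v` to `u` contains a rainbow `K_k`, then so
does `c`. -/
theorem hasRainbowClique_of_symmetrize {V : Type*} (G : SimpleGraph V) (c : Sym2 V → ℕ)
    (u v : V) (huv : ¬ G.Adj u v) (hne : u ≠ v) (hN : G.neighborSet u = G.neighborSet v)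
    (σ : ℕ → ℕ) (hinj : Set.InjOn σ (satColors G c u))
    (hfresh : ∀ a ∈ satColors G c u, σ a ∉ c '' G.edgeSet) (k : ℕ)
    (hrb : HasRainbowClique G (symmetrize G c u v σ) k) :
    HasRainbowClique G c k := by
  classical
  obtain ⟨S, hcard, hclq, hrbS⟩ := hrb
  by_cases hv : v ∈ S
  · -- replace `v` by `u`
    have hu : u ∉ S := fun h => huv (hclq u h v hv hne)
    have hNuv : ∀ x, G.Adj u x ↔ G.Adj v x := by
      intro x
      constructor <;> intro h
      · have hx : x ∈ G.neighborSet u := h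
        rw [hN] at hx; exact hx
      · have hx : x ∈ G.neighborSet v := h
        rw [← hN] at hx; exact hx
    set T : Finset V := insert u (S.erase v) with hT
    have huE : u ∉ S.erase v := fun h => hu (Finset.mem_of_mem_erase h)
    have hmemT : ∀ x ∈ T, x = u ∨ (x ∈ S ∧ x ≠ v) := by
      intro x hx
      rcases Finset.mem_insert.mp hx with h | h
      · exact Or.inl h
      · exact Or.inr ⟨Finset.mem_of_mem_erase h, Finset.ne_of_mem_erase h⟩
    set φ : V → V := fun x => if x = u then v else x with hφ
    have hφmem : ∀ x ∈ T, φ x ∈ S := by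
      intro x hx
      rcases hmemT x hx with h | h
      · simp [hφ, h, hv]
      · have hxu : x ≠ u := fun hh => hu (hh ▸ h.1)
        simp [hφ, hxu, h.1]
    have hφinj : ∀ x ∈ T, ∀ y ∈ T, φ x = φ y → x = y := by
      intro x hx y hy hxy
      by_cases hxu : x = u <;> by_cases hyu : y = u
      · rw [hxu, hyu]
      · exfalso
        rcases hmemT y hy with h | h
        · exact hyu h
        · simp only [hφ, hxu, if_pos rfl, if_neg hyu] at hxy
          exact h.2 hxy.symm
      · exfalso
        rcases hmemT x hx with h | h
        · exact hxu h
        · simp only [hφ, hyu, if_neg hxu, if_pos rfl] at hxy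
          exact h.2 hxy
      · simpa [hφ, hxu, hyu] using hxy
    have hclqT : ∀ x ∈ T, ∀ y ∈ T, x ≠ y → G.Adj x y := by
      have key : ∀ y ∈ S.erase v, G.Adj u y := by
        intro y hy
        have hyS := Finset.mem_of_mem_erase hy
        have hyv := Finset.ne_of_mem_erase hy
        exact (hNuv y).mpr (hclq v hv y hyS (Ne.symm hyv))
      intro x hx y hy hxy
      rcases Finset.mem_insert.mp hx with h1 | h1 <;>
        rcases Finset.mem_insert.mp hy with h2 | h2
      · exact absurd (h1.trans h2.symm) hxy
      · exact h1 ▸ key y h2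
      · exact (h2 ▸ key x h1).symm
      · exact hclq x (Finset.mem_of_mem_erase h1) y (Finset.mem_of_mem_erase h2) hxy
    -- transported colors
    have hkey : ∀ x ∈ T, ∀ y ∈ T, x ≠ y →
        symmetrize G c u v σ s(φ x, φ y) =
          if Saturates G c u (c s(x, y)) then σ (c s(x, y)) else c s(x, y) := by
      have base : ∀ y ∈ S.erase v,
          symmetrize G c u v σ s(φ u, φ y) =
            if Saturates G c u (c s(u, y)) then σ (c s(u, y)) else c s(u, y) := by
        intro y hy
        have hyu : y ≠ u := fun h => huE (h ▸ hy)
        have hadj : G.Adj v y := (hNuv y).mp (hclqT u (Finset.mem_insert_self u _) y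
          (Finset.mem_insert_of_mem hy) (Ne.symm hyu))
        have : φ u = v := by simp [hφ]
        rw [this]
        have : φ y = y := by simp [hφ, hyu]
        rw [this]
        exact symmetrize_adj G c u v σ hadj
      intro x hx y hy hxy
      by_cases hxu : x = u
      · subst hxu
        have hyE : y ∈ S.erase v := (Finset.mem_insert.mp hy).resolve_left (Ne.symm hxy)
        exact base y hyE
      · by_cases hyu : y = u
        · subst hyu
          have hxE : x ∈ S.erase v := (Finset.mem_insert.mp hx).resolve_left hxu
          rw [Sym2.eq_swap, base x hxE, Sym2.eq_swap]
        · -- neither is u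
          have hxE : x ∈ S.erase v := (Finset.mem_insert.mp hx).resolve_left hxu
          have hyE : y ∈ S.erase v := (Finset.mem_insert.mp hy).resolve_left hyu
          have hφx : φ x = x := by simp [hφ, hxu]
          have hφy : φ y = y := by simp [hφ, hyu]
          rw [hφx, hφy]
          have hvnot : v ∉ s(x, y) := by
            rw [Sym2.mem_iff]
            rintro (h | h)
            · exact Finset.ne_of_mem_erase hxE h.symm
            · exact Finset.ne_of_mem_erase hyE h.symm
          rw [symmetrize_not_mem G c u v σ hvnot]
          have hnotsat : ¬ Saturates G c u (c s(x, y)) := by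
            intro hs
            have := hs.2 s(x, y) (hclqT x hx y hy hxy) rfl
            rw [Sym2.mem_iff] at this
            rcases this with h | h
            · exact hxu h.symm
            · exact hyu h.symm
          rw [if_neg hnotsat]
    refine ⟨T, ?_, hclqT, ?_⟩
    · rw [hT, Finset.card_insert_of_notMem huE, Finset.card_erase_of_mem hv, hcard]
      have hk : 1 ≤ k := by
        rw [← hcard]; exact Finset.card_pos.mpr ⟨v, hv⟩
      omega
    · intro x hx y hy z hz w hw hxy hzw heq
      have hφxy : φ x ≠ φ y := fun h => hxy (hφinj x hx y hy h)
      have hφzw : φ z ≠ φ w := fun h => hzw (hφinj z hz w hw h)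
      have h1 := hkey x hx y hy hxy
      have h2 := hkey z hz w hw hzw
      have hceq : symmetrize G c u v σ s(φ x, φ y) = symmetrize G c u v σ s(φ z, φ w) := by
        rw [h1, h2, heq]
      have hs := hrbS (φ x) (hφmem x hx) (φ y) (hφmem y hy) (φ z) (hφmem z hz)
        (φ w) (hφmem w hw) hφxy hφzw hceq
      rw [Sym2.eq_iff] at hs ⊢
      rcases hs with ⟨h1, h2⟩ | ⟨h1, h2⟩
      · exact Or.inl ⟨hφinj x hx z hz h1, hφinj y hy w hw h2⟩
      · exact Or.inr ⟨hφinj x hx w hw h1, hφinj y hy z hz h2⟩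
  · -- v not in the clique: colors are unchanged on it
    refine ⟨S, hcard, hclq, ?_⟩
    intro x hx y hy z hz w hw hxy hzw heq
    have hnot : ∀ a ∈ S, ∀ b ∈ S, v ∉ s(a, b) := by
      intro a ha b hb h
      rw [Sym2.mem_iff] at h
      rcases h with h | h
      · exact hv (h ▸ ha)
      · exact hv (h ▸ hb)
    have e1 := symmetrize_not_mem G c u v σ (hnot x hx y hy)
    have e2 := symmetrize_not_mem G c u v σ (hnot z hz w hw)
    exact hrbS x hx y hy z hz w hw hxy hzw (by rw [e1, e2, heq])
end
end

section
/- Let G be a complete multi-partite graph and c an edge-coloring of G with no rainbow K_k using the maximum possible number of colors. If a color a is saturated by a partite set U (every edge of color a is incident to a vertex of U), then a is saturated by a single vertex of U (every edge of color a is incident to that vertex). -/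
open Classical

noncomputable section

/-- The complete multipartite graph `K_{n 0, …, n (r-1)}` with partite sets
`U_i = {i} × Fin (n i)`. -/
def KMP (r : ℕ) (n : ℕ → ℕ) : SimpleGraph (Σ i : Fin r, Fin (n i)) :=
  SimpleGraph.completeMultipartiteGraph (fun i : Fin r => Fin (n i))

/-- A color `a` is saturated by a set `S` of vertices: some edge has color `a` and
every edge of color `a` has an endpoint in `S`. -/
def SatBySet {V : Type*} (G : SimpleGraph V) (c : Sym2 V → ℕ) (S : Set V) (a : ℕ) : Prop :=
  (∃ e ∈ G.edgeSet, c e = a) ∧ ∀ e ∈ G.edgeSet, c e = a → ∃ x ∈ S, x ∈ e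

/-- In an extremal coloring for `ar(G, K_k)` of a complete multipartite graph `G`,
a color saturated by a partite set is saturated by a single vertex of that set. -/
theorem saturates_vertex_of_satBySet (r : ℕ) (n : ℕ → ℕ) (k : ℕ)
    (c : Sym2 (Σ i : Fin r, Fin (n i)) → ℕ)
    (hnr : ¬ HasRainbowClique (KMP r n) c k)
    (hmax : ncolors (KMP r n) c = antiRamsey (KMP r n) k)
    (a : ℕ) (i₀ : Fin r)
    (hsat : SatBySet (KMP r n) c {x : Σ i : Fin r, Fin (n i) | x.1 = i₀} a) :
    ∃ w : Σ i : Fin r, Fin (n i), w.1 = i₀ ∧ Saturates (KMP r n) c w a := by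
  classical
  set G := KMP r n with hG
  by_contra hno
  push_neg at hno
  obtain ⟨⟨e₀, he₀G, he₀a⟩, hcov⟩ := hsat
  obtain ⟨x₀, hx₀i, hx₀e⟩ := hcov e₀ he₀G he₀a
  have hnsat : ¬ Saturates G c x₀ a := hno x₀ hx₀i
  have hB : ¬ ∀ e ∈ G.edgeSet, c e = a → x₀ ∈ e :=
    fun h => hnsat ⟨⟨e₀, he₀G, he₀a⟩, h⟩
  push_neg at hB
  obtain ⟨f, hfG, hfa, hx₀f⟩ := hB
  have hfin : (c '' G.edgeSet).Finite := (G.edgeSet.toFinite).image c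
  obtain ⟨b, hb⟩ := Infinite.exists_notMem_finset hfin.toFinset
  rw [Set.Finite.mem_toFinset] at hb
  set c' : Sym2 (Σ i : Fin r, Fin (n i)) → ℕ :=
    fun e => if c e = a ∧ x₀ ∈ e then b else c e with hc'
  -- image description
  have himg : c' '' G.edgeSet = insert b (c '' G.edgeSet) := by
    ext d
    constructor
    · rintro ⟨e, heG, rfl⟩
      by_cases h : c e = a ∧ x₀ ∈ e
      · simp [hc', h]
      · simp only [hc', if_neg h]
        exact Set.mem_insert_iff.mpr (Or.inr ⟨e, heG, rfl⟩)
    · intro hd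
      rcases Set.mem_insert_iff.mp hd with rfl | ⟨e, heG, rfl⟩
      · exact ⟨e₀, he₀G, by simp [hc', he₀a, hx₀e]⟩
      · by_cases h : c e = a
        · refine ⟨f, hfG, ?_⟩
          have hnc : ¬ (c f = a ∧ x₀ ∈ f) := fun hh => hx₀f hh.2
          show (if c f = a ∧ x₀ ∈ f then b else c f) = c e
          rw [if_neg hnc, hfa, h]
        · refine ⟨e, heG, ?_⟩
          have : ¬ (c e = a ∧ x₀ ∈ e) := fun hh => h hh.1
          simp [hc', this]
  have hcount : ncolors G c' = ncolors G c + 1 := by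
    rw [ncolors, himg, Set.ncard_insert_of_notMem hb hfin, ncolors]
  -- no rainbow clique for c'
  have hnr' : ¬ HasRainbowClique G c' k := by
    rintro ⟨S, hScard, hSadj, hSrb⟩
    apply hnr
    refine ⟨S, hScard, hSadj, ?_⟩
    intro x hx y hy z hz w hw hxy hzw hcc
    have hxyG : s(x, y) ∈ G.edgeSet := (SimpleGraph.mem_edgeSet G).mpr (hSadj x hx y hy hxy)
    have hzwG : s(z, w) ∈ G.edgeSet := (SimpleGraph.mem_edgeSet G).mpr (hSadj z hz w hw hzw)
    by_cases h1 : c s(x, y) = a ∧ x₀ ∈ s(x, y) <;>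
      by_cases h2 : c s(z, w) = a ∧ x₀ ∈ s(z, w)
    · exact hSrb x hx y hy z hz w hw hxy hzw (by simp [hc', h1, h2])
    · exfalso
      -- c s(z,w) = a but x₀ ∉ s(z,w)
      have hza : c s(z, w) = a := hcc ▸ h1.1
      have hx₀zw : x₀ ∉ s(z, w) := fun hh => h2 ⟨hza, hh⟩
      obtain ⟨u, hui, huzw⟩ := hcov s(z, w) hzwG hza
      have huS : u ∈ S := by
        rcases Sym2.mem_iff.mp huzw with rfl | rfl
        · exact hz
        · exact hw
      have hx₀S : x₀ ∈ S := by
        rcases Sym2.mem_iff.mp h1.2 with rfl | rfl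
        · exact hx
        · exact hy
      have hne : x₀ ≠ u := fun hh => hx₀zw (hh ▸ huzw)
      have hadj := hSadj x₀ hx₀S u huS hne
      have : x₀.1 ≠ u.1 := hadj
      exact this (hx₀i.trans hui.symm)
    · exfalso
      have hxa : c s(x, y) = a := hcc.symm ▸ h2.1
      have hx₀xy : x₀ ∉ s(x, y) := fun hh => h1 ⟨hxa, hh⟩
      obtain ⟨u, hui, huxy⟩ := hcov s(x, y) hxyG hxa
      have huS : u ∈ S := by
        rcases Sym2.mem_iff.mp huxy with rfl | rfl
        · exact hx
        · exact hy
      have hx₀S : x₀ ∈ S := by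
        rcases Sym2.mem_iff.mp h2.2 with rfl | rfl
        · exact hz
        · exact hw
      have hne : x₀ ≠ u := fun hh => hx₀xy (hh ▸ huxy)
      have hadj := hSadj x₀ hx₀S u huS hne
      have : x₀.1 ≠ u.1 := hadj
      exact this (hx₀i.trans hui.symm)
    · exact hSrb x hx y hy z hz w hw hxy hzw (by simp only [hc', if_neg h1, if_neg h2]; exact hcc)
  -- extremality contradiction
  have hmem : ncolors G c + 1 ∈
      {m | ∃ cc : Sym2 (Σ i : Fin r, Fin (n i)) → ℕ,
        ¬ HasRainbowClique G cc k ∧ ncolors G cc = m} :=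
    ⟨c', hnr', hcount⟩
  have hbdd : BddAbove {m | ∃ cc : Sym2 (Σ i : Fin r, Fin (n i)) → ℕ,
      ¬ HasRainbowClique G cc k ∧ ncolors G cc = m} := by
    refine ⟨Nat.card (Sym2 (Σ i : Fin r, Fin (n i))), ?_⟩
    rintro m ⟨cc, -, rfl⟩
    calc (cc '' G.edgeSet).ncard ≤ G.edgeSet.ncard := Set.ncard_image_le G.edgeSet.toFinite
      _ ≤ Nat.card (Sym2 (Σ i : Fin r, Fin (n i))) := by
          have h := Set.ncard_le_ncard (Set.subset_univ G.edgeSet) Set.finite_univ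
          rwa [Set.ncard_univ] at h
  have hle : ncolors G c + 1 ≤ antiRamsey G k := le_csSup hbdd hmem
  rw [← hmax] at hle
  omega
end
end

section
/- Let K_r be edge-colored with a coloring c containing no rainbow K_k, let f(v_i) = n_i, and let G^c = B(K_r^c, f) be the blow-up colored graph, which is the complete multi-partite graph K_{n₁,…,n_r}. Then G^c contains no rainbow K_k. -/
open Classical

noncomputable section

/-- An injective encoding of the vertices of the blow-up. -/
def vcode {r : ℕ} {n : ℕ → ℕ} (x : Σ i : Fin r, Fin (n i)) : ℕ :=
  Nat.pair x.1 x.2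

/-- The blow-up `B(K_r^c, f)` of an edge-colored `K_r`, with `f v_i = n i`:
a color saturated by no vertex is copied identically to all blown-up edges,
a color saturated by exactly one vertex `v_i` is split into `n i` colors (one per copy
of `v_i`), and an exclusive color on the edge `v_i v_j` (equivalently, a color saturated
by the two vertices `v_i, v_j`) is split into `n i * n j` distinct colors. -/
noncomputable def blowupColoring (r : ℕ) (n : ℕ → ℕ) (c : Sym2 (Fin r) → ℕ) :
    Sym2 (Σ i : Fin r, Fin (n i)) → ℕ :=
  Sym2.lift ⟨fun x y =>
    if Saturates (⊤ : SimpleGraph (Fin r)) c x.1 (c s(x.1, y.1)) ∧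
        Saturates (⊤ : SimpleGraph (Fin r)) c y.1 (c s(x.1, y.1)) then
      Nat.pair 2 (Nat.pair (c s(x.1, y.1))
        (Nat.pair (min (vcode x) (vcode y)) (max (vcode x) (vcode y))))
    else if Saturates (⊤ : SimpleGraph (Fin r)) c x.1 (c s(x.1, y.1)) then
      Nat.pair 1 (Nat.pair (c s(x.1, y.1)) (vcode x))
    else if Saturates (⊤ : SimpleGraph (Fin r)) c y.1 (c s(x.1, y.1)) then
      Nat.pair 1 (Nat.pair (c s(x.1, y.1)) (vcode y))
    else Nat.pair 0 (c s(x.1, y.1)), by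
      intro x y
      have hc : s(y.1, x.1) = s(x.1, y.1) := Sym2.eq_swap
      dsimp only
      rw [hc]
      by_cases h1 : Saturates (⊤ : SimpleGraph (Fin r)) c x.1 (c s(x.1, y.1)) <;>
      by_cases h2 : Saturates (⊤ : SimpleGraph (Fin r)) c y.1 (c s(x.1, y.1)) <;>
      simp [h1, h2, min_comm, max_comm]⟩

/-- If the edge-coloring `c` of `K_r` has no rainbow `K_k`, then its blow-up
`B(K_r^c, f)` has no rainbow `K_k` either. -/
theorem blowupColoring_no_rainbow (r k : ℕ) (n : ℕ → ℕ) (c : Sym2 (Fin r) → ℕ)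
    (hc : ¬ HasRainbowClique (⊤ : SimpleGraph (Fin r)) c k) :
    ¬ HasRainbowClique (KMP r n) (blowupColoring r n c) k := by
  rintro ⟨S, hcard, hadj, hrb⟩
  apply hc
  have hne : ∀ X ∈ S, ∀ Y ∈ S, X ≠ Y → X.1 ≠ Y.1 := by
    intro X hX Y hY h
    exact hadj X hX Y hY h
  have hinj : Set.InjOn Sigma.fst (S : Set (Σ i : Fin r, Fin (n i))) := by
    intro X hX Y hY h
    by_contra hne'
    exact hne X hX Y hY hne' h
  refine ⟨S.image Sigma.fst, ?_, ?_, ?_⟩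
  · rw [Finset.card_image_of_injOn hinj, hcard]
  · intro x hx y hy hxy
    simpa using hxy
  · intro x hx y hy z hz w hw hxy hzw heq
    obtain ⟨X, hX, rfl⟩ := Finset.mem_image.mp hx
    obtain ⟨Y, hY, rfl⟩ := Finset.mem_image.mp hy
    obtain ⟨Z, hZ, rfl⟩ := Finset.mem_image.mp hz
    obtain ⟨W, hW, rfl⟩ := Finset.mem_image.mp hw
    have hXY : X ≠ Y := fun h => hxy (by rw [h])
    have hZW : Z ≠ W := fun h => hzw (by rw [h])
    set a := c s(X.1, Y.1) with ha
    have hedgeXY : s(X.1, Y.1) ∈ (⊤ : SimpleGraph (Fin r)).edgeSet := by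
      simpa using hxy
    have hedgeZW : s(Z.1, W.1) ∈ (⊤ : SimpleGraph (Fin r)).edgeSet := by
      simpa using hzw
    have hmem1 : ∀ u, Saturates (⊤ : SimpleGraph (Fin r)) c u a →
        u = X.1 ∨ u = Y.1 := by
      intro u hu
      have := hu.2 _ hedgeXY ha.symm
      simpa [Sym2.mem_iff] using this
    have hmem2 : ∀ u, Saturates (⊤ : SimpleGraph (Fin r)) c u a →
        u = Z.1 ∨ u = W.1 := by
      intro u hu
      have := hu.2 _ hedgeZW heq.symm
      simpa [Sym2.mem_iff] using this
    by_cases h2 : ∃ u v, u ≠ v ∧ Saturates (⊤ : SimpleGraph (Fin r)) c u a ∧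
        Saturates (⊤ : SimpleGraph (Fin r)) c v a
    · obtain ⟨u, v, huv, hu, hv⟩ := h2
      have e1 : s(X.1, Y.1) = s(u, v) := by
        rw [← Sym2.mem_and_mem_iff huv]
        exact ⟨hu.2 _ hedgeXY ha.symm, hv.2 _ hedgeXY ha.symm⟩
      have e2 : s(Z.1, W.1) = s(u, v) := by
        rw [← Sym2.mem_and_mem_iff huv]
        exact ⟨hu.2 _ hedgeZW heq.symm, hv.2 _ hedgeZW heq.symm⟩
      rw [e1, e2]
    · have huniq : ∀ u v, Saturates (⊤ : SimpleGraph (Fin r)) c u a →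
          Saturates (⊤ : SimpleGraph (Fin r)) c v a → u = v := by
        intro u v hu hv
        by_contra h
        exact h2 ⟨u, v, h, hu, hv⟩
      have key : blowupColoring r n c s(X, Y) = blowupColoring r n c s(Z, W) := by
        simp only [blowupColoring, Sym2.lift_mk]
        rw [← heq, ← ha]
        by_cases hx' : Saturates (⊤ : SimpleGraph (Fin r)) c X.1 a <;>
        by_cases hy' : Saturates (⊤ : SimpleGraph (Fin r)) c Y.1 a <;>
        by_cases hz' : Saturates (⊤ : SimpleGraph (Fin r)) c Z.1 a <;>
        by_cases hw' : Saturates (⊤ : SimpleGraph (Fin r)) c W.1 a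
        all_goals (try exact absurd (huniq _ _ hx' hy') (hne X hX Y hY hXY))
        all_goals (try exact absurd (huniq _ _ hz' hw') (hne Z hZ W hW hZW))
        -- cases with exactly one saturator on each side, or none
        · -- Sat X, Sat Z
          have hXZ : X = Z := hinj hX hZ (huniq _ _ hx' hz')
          subst hXZ
          simp [hx', hy', hw']
        · -- Sat X, Sat W
          have hXW : X = W := hinj hX hW (huniq _ _ hx' hw')
          subst hXW
          simp [hx', hy', hz']
        · -- Sat X, neither Z nor W: contradiction
          rcases hmem2 _ hx' with h | h
          · exact absurd (h ▸ hx') hz'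
          · exact absurd (h ▸ hx') hw'
        · -- Sat Y, Sat Z
          have hYZ : Y = Z := hinj hY hZ (huniq _ _ hy' hz')
          subst hYZ
          simp [hx', hy', hw']
        · -- Sat Y, Sat W
          have hYW : Y = W := hinj hY hW (huniq _ _ hy' hw')
          subst hYW
          simp [hx', hy', hz']
        · -- Sat Y, neither Z nor W: contradiction
          rcases hmem2 _ hy' with h | h
          · exact absurd (h ▸ hy') hz'
          · exact absurd (h ▸ hy') hw'
        · -- Sat Z only on right, none on left: contradiction
          rcases hmem1 _ hz' with h | h
          · exact absurd (h ▸ hz') hx'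
          · exact absurd (h ▸ hz') hy'
        · -- Sat W only on right, none on left: contradiction
          rcases hmem1 _ hw' with h | h
          · exact absurd (h ▸ hw') hx'
          · exact absurd (h ▸ hw') hy'
        · -- no saturator
          simp [hx', hy', hz', hw']
      have hSym : s(X, Y) = s(Z, W) := hrb X hX Y hY Z hZ W hW hXY hZW key
      have := congrArg (Sym2.map Sigma.fst) hSym
      simpa using this
end
end

section
/- For k ≥ 3 and n₁ ≥ ⋯ ≥ n_k ≥ 1, there exists an edge-coloring of K_{n₁,…,n_k} with no rainbow K_k using exactly (∑_{1≤i<j≤k} n_i n_j) − n_k(n_{k−1} + n_{k−2} − 1) colors. (Lower bound via the normal coloring.) -/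
open Classical

noncomputable section

namespace NormalAux

variable (k : ℕ) (n : ℕ → ℕ)

abbrev Vt := Σ i : Fin k, Fin (n i)

noncomputable def encV : Vt k n → ℕ := fun v => (Fintype.equivFin (Vt k n) v : ℕ)

lemma encV_inj : Function.Injective (encV k n) := by
  intro a b h
  exact (Fintype.equivFin (Vt k n)).injective (Fin.val_injective h)

lemma encV_lt (v : Vt k n) : encV k n v < Fintype.card (Vt k n) :=
  (Fintype.equivFin (Vt k n) v).isLt

noncomputable def encE : Sym2 (Vt k n) → ℕ := fun e => (Fintype.equivFin (Sym2 (Vt k n)) e : ℕ)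

lemma encE_inj : Function.Injective (encE k n) := by
  intro a b h
  exact (Fintype.equivFin _).injective (Fin.val_injective h)

def isSp (u v : Vt k n) : Prop :=
  (u.1 : ℕ) = k - 1 ∧ ((v.1 : ℕ) = k - 2 ∨ (v.1 : ℕ) = k - 3)

noncomputable def cf : Vt k n → Vt k n → ℕ := fun u v =>
  if isSp k n u v then encV k n u
  else if isSp k n v u then encV k n v
  else Fintype.card (Vt k n) + encE k n s(u, v)

lemma not_both (hk : 3 ≤ k) {u v : Vt k n} (h : isSp k n u v) : ¬ isSp k n v u := by
  rintro ⟨h1, h2⟩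
  obtain ⟨h3, h4⟩ := h
  omega

lemma cf_symm (hk : 3 ≤ k) (u v : Vt k n) : cf k n u v = cf k n v u := by
  unfold cf
  by_cases h1 : isSp k n u v
  · rw [if_pos h1, if_neg (not_both k n hk h1), if_pos h1]
  · by_cases h2 : isSp k n v u
    · rw [if_neg h1, if_pos h2, if_pos h2]
    · rw [if_neg h1, if_neg h2, if_neg h2, if_neg h1, Sym2.eq_swap]

noncomputable def nc (hk : 3 ≤ k) : Sym2 (Vt k n) → ℕ :=
  Sym2.lift ⟨cf k n, cf_symm k n hk⟩

lemma nc_sp (hk : 3 ≤ k) {u v : Vt k n} (h : isSp k n u v) :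
    nc k n hk s(u, v) = encV k n u := by
  simp [nc, cf, h]

lemma nc_nonsp (hk : 3 ≤ k) {u v : Vt k n} (h1 : ¬ isSp k n u v) (h2 : ¬ isSp k n v u) :
    nc k n hk s(u, v) = Fintype.card (Vt k n) + encE k n s(u, v) := by
  simp [nc, cf, h1, h2]

end NormalAux

lemma KMP_adj {r : ℕ} {n : ℕ → ℕ} (u v : Σ i : Fin r, Fin (n i)) :
    (KMP r n).Adj u v ↔ u.1 ≠ v.1 := by
  simp [KMP, SimpleGraph.completeMultipartiteGraph]

lemma card_edgeFinset_KMP (k : ℕ) (n : ℕ → ℕ) :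
    (KMP k n).edgeFinset.card =
      ∑ i ∈ Finset.range k, ∑ j ∈ Finset.range k, if i < j then n i * n j else 0 := by
  classical
  set P : Finset ((Σ i : Fin k, Fin (n i)) × (Σ i : Fin k, Fin (n i))) :=
    Finset.univ.filter (fun p => (p.1.1 : ℕ) < (p.2.1 : ℕ)) with hP
  have himg : (KMP k n).edgeFinset = P.image (fun p => s(p.1, p.2)) := by
    ext e
    induction e with
    | _ u v =>
      simp only [SimpleGraph.mem_edgeFinset, SimpleGraph.mem_edgeSet, KMP_adj,
        Finset.mem_image, hP, Finset.mem_filter, Finset.mem_univ, true_and]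
      constructor
      · intro h
        have h' : (u.1 : ℕ) ≠ (v.1 : ℕ) := fun hh => h (Fin.ext hh)
        rcases lt_or_gt_of_ne h' with hlt | hgt
        · exact ⟨(u, v), hlt, rfl⟩
        · exact ⟨(v, u), hgt, Sym2.eq_swap⟩
      · rintro ⟨⟨a, b⟩, hab, he⟩
        rcases Sym2.eq_iff.mp he with ⟨rfl, rfl⟩ | ⟨rfl, rfl⟩
        · exact fun hh => absurd (congrArg Fin.val hh) (Nat.ne_of_lt hab)
        · exact fun hh => absurd (congrArg Fin.val hh.symm) (Nat.ne_of_lt hab)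
  have hinj : Set.InjOn (fun p : (Σ i : Fin k, Fin (n i)) × (Σ i : Fin k, Fin (n i)) =>
      s(p.1, p.2)) P := by
    rintro ⟨a, b⟩ ha ⟨c, d⟩ hc h
    simp only [Finset.mem_coe, hP, Finset.mem_filter, Finset.mem_univ, true_and] at ha hc
    rcases Sym2.eq_iff.mp h with ⟨rfl, rfl⟩ | ⟨rfl, rfl⟩
    · rfl
    · exfalso
      have ha' : (a.1 : ℕ) < (b.1 : ℕ) := ha
      have hc' : (b.1 : ℕ) < (a.1 : ℕ) := hc
      omega
  rw [himg, Finset.card_image_of_injOn hinj, Finset.card_filter]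
  rw [Fintype.sum_prod_type]
  have : ∀ i : Fin k, ∀ x : Fin (n i),
      (∑ v : Σ j : Fin k, Fin (n j), if (i : ℕ) < (v.1 : ℕ) then 1 else 0) =
      ∑ j : Fin k, if (i : ℕ) < (j : ℕ) then n j else 0 := by
    intro i x
    rw [← Finset.univ_sigma_univ, Finset.sum_sigma]
    refine Finset.sum_congr rfl fun j _ => ?_
    by_cases hij : (i : ℕ) < (j : ℕ) <;> simp [hij]
  calc (∑ u : Σ i : Fin k, Fin (n i), ∑ v : Σ j : Fin k, Fin (n j),
          if (u.1 : ℕ) < (v.1 : ℕ) then 1 else 0)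
      = ∑ i : Fin k, ∑ _x : Fin (n i), ∑ j : Fin k, if (i : ℕ) < (j : ℕ) then n j else 0 := by
        rw [← Finset.univ_sigma_univ, Finset.sum_sigma]
        exact Finset.sum_congr rfl fun i _ => Finset.sum_congr rfl fun x _ => this i x
    _ = ∑ i : Fin k, ∑ j : Fin k, if (i : ℕ) < (j : ℕ) then n i * n j else 0 := by
        refine Finset.sum_congr rfl fun i _ => ?_
        rw [Finset.sum_const, Finset.card_univ, Fintype.card_fin, smul_eq_mul,
          Finset.mul_sum]
        refine Finset.sum_congr rfl fun j _ => ?_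
        by_cases hij : (i : ℕ) < (j : ℕ) <;> simp [hij]
    _ = ∑ i ∈ Finset.range k, ∑ j ∈ Finset.range k, if i < j then n i * n j else 0 := by
        rw [← Fin.sum_univ_eq_sum_range
          (fun i => ∑ j ∈ Finset.range k, if i < j then n i * n j else 0) k]
        refine Finset.sum_congr rfl fun i _ => ?_
        rw [← Fin.sum_univ_eq_sum_range (fun j => if (i : ℕ) < j then n i * n j else 0) k]

/-- Lower bound (normal coloring): for `k ≥ 3` and `n₁ ≥ … ≥ n_k ≥ 1` there is an
edge-coloring of `K_{n₁,…,n_k}` with no rainbow `K_k` using exactly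
`∑_{i<j} n_i n_j - n_k (n_{k-1} + n_{k-2} - 1)` colors. -/
theorem exists_normal_coloring (k : ℕ) (hk : 3 ≤ k) (n : ℕ → ℕ)
    (hmono : ∀ i j, i ≤ j → j < k → n j ≤ n i) (hpos : 1 ≤ n (k - 1)) :
    ∃ c : Sym2 (Σ i : Fin k, Fin (n i)) → ℕ,
      ¬ HasRainbowClique (KMP k n) c k ∧
      ncolors (KMP k n) c =
        (∑ i ∈ Finset.range k, ∑ j ∈ Finset.range k, if i < j then n i * n j else 0)
        - n (k - 1) * (n (k - 2) + n (k - 3) - 1) := by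
  classical
  have hA : k - 1 < k := by omega
  have hB : k - 2 < k := by omega
  have hC : k - 3 < k := by omega
  set A : Fin k := ⟨k - 1, hA⟩ with hAdef
  set B : Fin k := ⟨k - 2, hB⟩ with hBdef
  set C : Fin k := ⟨k - 3, hC⟩ with hCdef
  have hnB : 0 < n (k - 2) := lt_of_lt_of_le hpos (hmono (k - 2) (k - 1) (by omega) (by omega))
  refine ⟨NormalAux.nc k n hk, ?_, ?_⟩
  · rintro ⟨S, hcard, hadj, hrb⟩
    have hinj : Set.InjOn (fun v : NormalAux.Vt k n => v.1) S := by
      intro x hx y hy hxy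
      by_contra hne
      exact ((KMP_adj x y).mp (hadj x hx y hy hne)) hxy
    have himg : S.image (fun v : NormalAux.Vt k n => v.1) = Finset.univ := by
      apply Finset.eq_univ_of_card
      rw [Finset.card_image_of_injOn hinj, hcard, Fintype.card_fin]
    obtain ⟨u, hu, huA⟩ := Finset.mem_image.mp (by rw [himg]; exact Finset.mem_univ A)
    obtain ⟨v, hv, hvB⟩ := Finset.mem_image.mp (by rw [himg]; exact Finset.mem_univ B)
    obtain ⟨w, hw, hwC⟩ := Finset.mem_image.mp (by rw [himg]; exact Finset.mem_univ C)
    have pu : (u.1 : ℕ) = k - 1 := by rw [huA]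
    have pv : (v.1 : ℕ) = k - 2 := by rw [hvB]
    have pw : (w.1 : ℕ) = k - 3 := by rw [hwC]
    have h1 : u ≠ v := by
      intro h
      rw [h] at pu; omega
    have h2 : u ≠ w := by
      intro h
      rw [h] at pu; omega
    have huv : NormalAux.isSp k n u v := ⟨pu, Or.inl pv⟩
    have huw : NormalAux.isSp k n u w := ⟨pu, Or.inr pw⟩
    have key := hrb u hu v hv u hu w hw h1 h2
      (by rw [NormalAux.nc_sp k n hk huv, NormalAux.nc_sp k n hk huw])
    have hvw : v = w := Sym2.congr_right.mp key
    rw [hvw] at pv; omega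
  · have hABne : (A : ℕ) ≠ (B : ℕ) := by show k - 1 ≠ k - 2; omega
    have hACne : (A : ℕ) ≠ (C : ℕ) := by show k - 1 ≠ k - 3; omega
    have hBCne : (B : ℕ) ≠ (C : ℕ) := by show k - 2 ≠ k - 3; omega
    set c := NormalAux.nc k n hk with hcdef
    have hset : ncolors (KMP k n) c = ((KMP k n).edgeFinset.image c).card := by
      simp only [ncolors]
      rw [← SimpleGraph.coe_edgeFinset, ← Finset.coe_image, Set.ncard_coe_finset]
    set Sp : Finset (Sym2 (NormalAux.Vt k n)) :=
      (KMP k n).edgeFinset.filter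
        (fun e => ∃ u v : NormalAux.Vt k n, e = s(u, v) ∧ NormalAux.isSp k n u v) with hSpdef
    set T := (KMP k n).edgeFinset \ Sp with hTdef
    have hSpsub : Sp ⊆ (KMP k n).edgeFinset := Finset.filter_subset _ _
    have hunion : Sp ∪ T = (KMP k n).edgeFinset := Finset.union_sdiff_of_subset hSpsub
    have hcT : ∀ e ∈ T, c e = Fintype.card (NormalAux.Vt k n) + NormalAux.encE k n e := by
      intro e he
      rw [hTdef, Finset.mem_sdiff, hSpdef, Finset.mem_filter] at he
      have hnsp : ¬ ∃ u v : NormalAux.Vt k n, e = s(u, v) ∧ NormalAux.isSp k n u v :=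
        fun h => he.2 ⟨he.1, h⟩
      induction e with
      | _ u v =>
        exact NormalAux.nc_nonsp k n hk (fun h => hnsp ⟨u, v, rfl, h⟩)
          (fun h => hnsp ⟨v, u, Sym2.eq_swap, h⟩)
    have hinjT : Set.InjOn c T := by
      intro e he f hf h
      rw [hcT e he, hcT f hf] at h
      exact NormalAux.encE_inj k n (by omega)
    have hcSp : Sp.image c =
        (Finset.univ : Finset (Fin (n (k - 1)))).image
          (fun x => NormalAux.encV k n ⟨A, x⟩) := by
      ext m
      simp only [Finset.mem_image]
      constructor
      · rintro ⟨e, he, rfl⟩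
        rw [hSpdef, Finset.mem_filter] at he
        obtain ⟨he1, u, v, rfl, hsp⟩ := he
        obtain ⟨i, x⟩ := u
        have hiA : i = A := Fin.ext hsp.1
        subst hiA
        exact ⟨x, Finset.mem_univ x, (NormalAux.nc_sp k n hk hsp).symm⟩
      · rintro ⟨x, -, rfl⟩
        refine ⟨s(⟨A, x⟩, ⟨B, ⟨0, hnB⟩⟩), ?_, NormalAux.nc_sp k n hk ⟨rfl, Or.inl rfl⟩⟩
        rw [hSpdef, Finset.mem_filter]
        constructor
        · rw [SimpleGraph.mem_edgeFinset, SimpleGraph.mem_edgeSet, KMP_adj]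
          exact fun h => hABne (congrArg Fin.val h)
        · exact ⟨⟨A, x⟩, ⟨B, ⟨0, hnB⟩⟩, rfl, ⟨rfl, Or.inl rfl⟩⟩
    have hinjA : Function.Injective (fun x : Fin (n (k - 1)) =>
        NormalAux.encV k n ⟨A, x⟩) := by
      intro x y h
      have h2 : (⟨A, x⟩ : NormalAux.Vt k n) = ⟨A, y⟩ := NormalAux.encV_inj k n h
      exact sigma_mk_injective (β := fun i : Fin k => Fin (n (i : ℕ))) h2
    have hcardSpImg : (Sp.image c).card = n (k - 1) := by
      rw [hcSp, Finset.card_image_of_injective _ hinjA, Finset.card_univ, Fintype.card_fin]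
    have hdisj : Disjoint (Sp.image c) (T.image c) := by
      rw [Finset.disjoint_left]
      intro m hm hm'
      rw [hcSp] at hm
      obtain ⟨x, -, rfl⟩ := Finset.mem_image.mp hm
      obtain ⟨e, he, hme⟩ := Finset.mem_image.mp hm'
      rw [hcT e he] at hme
      have := NormalAux.encV_lt k n ⟨A, x⟩
      omega
    have himgu : (KMP k n).edgeFinset.image c = Sp.image c ∪ T.image c := by
      rw [← Finset.image_union, hunion]
    -- card of Sp
    have hcardSp : Sp.card = n (k - 1) * (n (k - 2) + n (k - 3)) := by
      set g : Fin (n (k - 1)) × (Fin (n (k - 2)) ⊕ Fin (n (k - 3))) →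
          Sym2 (NormalAux.Vt k n) :=
        fun p => s(⟨A, p.1⟩, Sum.elim (fun y => (⟨B, y⟩ : NormalAux.Vt k n))
          (fun z => (⟨C, z⟩ : NormalAux.Vt k n)) p.2) with hgdef
      have hgim : Sp = Finset.univ.image g := by
        ext e
        rw [hSpdef, Finset.mem_filter, Finset.mem_image]
        constructor
        · rintro ⟨he1, u, v, rfl, hsp⟩
          obtain ⟨i, x⟩ := u
          obtain ⟨j, y⟩ := v
          have hiA : i = A := Fin.ext hsp.1
          subst hiA
          rcases hsp.2 with hj | hj
          · have hjB : j = B := Fin.ext hj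
            subst hjB
            exact ⟨(x, Sum.inl y), Finset.mem_univ _, rfl⟩
          · have hjC : j = C := Fin.ext hj
            subst hjC
            exact ⟨(x, Sum.inr y), Finset.mem_univ _, rfl⟩
        · rintro ⟨⟨x, yz⟩, -, rfl⟩
          rcases yz with y | z <;> simp only [hgdef, Sum.elim_inl, Sum.elim_inr]
          · constructor
            · rw [SimpleGraph.mem_edgeFinset, SimpleGraph.mem_edgeSet, KMP_adj]
              exact fun h => hABne (congrArg Fin.val h)
            · exact ⟨⟨A, x⟩, ⟨B, y⟩, rfl, ⟨rfl, Or.inl rfl⟩⟩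
          · constructor
            · rw [SimpleGraph.mem_edgeFinset, SimpleGraph.mem_edgeSet, KMP_adj]
              exact fun h => hACne (congrArg Fin.val h)
            · exact ⟨⟨A, x⟩, ⟨C, z⟩, rfl, ⟨rfl, Or.inr rfl⟩⟩
      have hginj : Function.Injective g := by
        rintro ⟨x, yz⟩ ⟨x', yz'⟩ h
        rcases yz with y | z <;> rcases yz' with y' | z' <;>
          simp only [hgdef, Sum.elim_inl, Sum.elim_inr] at h <;>
          rcases Sym2.eq_iff.mp h with ⟨h1, h2⟩ | ⟨h1, h2⟩
        · rw [sigma_mk_injective h1, sigma_mk_injective h2]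
        · exact absurd (congrArg (fun v : NormalAux.Vt k n => (v.1 : ℕ)) h1) hABne
        · exact absurd (congrArg (fun v : NormalAux.Vt k n => (v.1 : ℕ)) h2) hBCne
        · exact absurd (congrArg (fun v : NormalAux.Vt k n => (v.1 : ℕ)) h1) hACne
        · exact absurd (congrArg (fun v : NormalAux.Vt k n => (v.1 : ℕ)) h2) hBCne.symm
        · exact absurd (congrArg (fun v : NormalAux.Vt k n => (v.1 : ℕ)) h1) hABne
        · rw [sigma_mk_injective h1, sigma_mk_injective h2]
        · exact absurd (congrArg (fun v : NormalAux.Vt k n => (v.1 : ℕ)) h1) hACne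
      rw [hgim, Finset.card_image_of_injective _ hginj, Finset.card_univ,
        Fintype.card_prod, Fintype.card_sum, Fintype.card_fin, Fintype.card_fin,
        Fintype.card_fin]
    have hSple : Sp.card ≤ (KMP k n).edgeFinset.card := Finset.card_le_card hSpsub
    have hTcard : T.card = (KMP k n).edgeFinset.card - Sp.card := Finset.card_sdiff_of_subset hSpsub
    rw [hset, himgu, Finset.card_union_of_disjoint hdisj, hcardSpImg,
      Finset.card_image_of_injOn hinjT]
    rw [card_edgeFinset_KMP k n] at hTcard hSple
    obtain ⟨t, ht⟩ : ∃ t, n (k - 2) + n (k - 3) = t + 1 := ⟨n (k - 2) + n (k - 3) - 1, by omega⟩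
    rw [ht] at hcardSp
    have hmul : n (k - 1) * (t + 1) = n (k - 1) * t + n (k - 1) := by ring
    rw [ht]
    simp only [Nat.add_sub_cancel]
    omega
end
end

section
/- Let c be any non-rainbow edge-coloring of K_k (k ≥ 3) and let G^c = B(K_k^c, f) be its blow-up with f(v_i) = n_i where n₁ ≥ ⋯ ≥ n_k. Then the number of colors of G^c is at most (∑_{1≤i<j≤k} n_i n_j) − n_k(n_{k−1} + n_{k−2} − 1). -/
open Classical

noncomputable section

section AuxCounting

variable (k : ℕ) (n : ℕ → ℕ) (c : Sym2 (Fin k) → ℕ)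

/-- The ordered pairs `(i, j)` with `i < j`. -/
def FP : Finset (Fin k × Fin k) := Finset.univ.filter fun p => p.1 < p.2

/-- The colors appearing on blown-up edges between parts `p.1` and `p.2`. -/
noncomputable def BP (p : Fin k × Fin k) : Finset ℕ :=
  Finset.image (fun pq : Fin (n p.1) × Fin (n p.2) =>
    blowupColoring k n c s(⟨p.1, pq.1⟩, ⟨p.2, pq.2⟩)) Finset.univ

lemma BP_eval {i j : Fin k} (p : Fin (n i)) (q : Fin (n j)) :
    blowupColoring k n c s((⟨i, p⟩ : Σ i : Fin k, Fin (n i)), (⟨j, q⟩ : Σ i : Fin k, Fin (n i))) =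
      if Saturates (⊤ : SimpleGraph (Fin k)) c i (c s(i, j)) ∧
          Saturates (⊤ : SimpleGraph (Fin k)) c j (c s(i, j)) then
        Nat.pair 2 (Nat.pair (c s(i, j))
          (Nat.pair (min (vcode (⟨i, p⟩ : Σ i : Fin k, Fin (n i))) (vcode (⟨j, q⟩ : Σ i : Fin k, Fin (n i))))
            (max (vcode (⟨i, p⟩ : Σ i : Fin k, Fin (n i))) (vcode (⟨j, q⟩ : Σ i : Fin k, Fin (n i))))))
      else if Saturates (⊤ : SimpleGraph (Fin k)) c i (c s(i, j)) then
        Nat.pair 1 (Nat.pair (c s(i, j)) (vcode (⟨i, p⟩ : Σ i : Fin k, Fin (n i))))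
      else if Saturates (⊤ : SimpleGraph (Fin k)) c j (c s(i, j)) then
        Nat.pair 1 (Nat.pair (c s(i, j)) (vcode (⟨j, q⟩ : Σ i : Fin k, Fin (n i))))
      else Nat.pair 0 (c s(i, j)) := by
  unfold blowupColoring
  rw [Sym2.lift_mk]

lemma mem_BP {i j : Fin k} (p : Fin (n i)) (q : Fin (n j)) :
    blowupColoring k n c s((⟨i, p⟩ : Σ i : Fin k, Fin (n i)), (⟨j, q⟩ : Σ i : Fin k, Fin (n i)))
      ∈ BP k n c (i, j) :=
  Finset.mem_image.2 ⟨(p, q), Finset.mem_univ _, rfl⟩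

lemma BP_card (p : Fin k × Fin k) : (BP k n c p).card ≤ n p.1 * n p.2 := by
  classical
  calc (BP k n c p).card
      ≤ (Finset.univ : Finset (Fin (n p.1) × Fin (n p.2))).card := Finset.card_image_le
    _ = n p.1 * n p.2 := by simp

lemma count_bound (C : Finset ℕ) (P : Finset (Fin k × Fin k)) (hPF : P ⊆ FP k)
    (hPB : ∀ p ∈ P, BP k n c p ⊆ C) :
    ncolors (KMP k n) (blowupColoring k n c) ≤
      C.card + ∑ p ∈ FP k \ P, n p.1 * n p.2 := by
  classical
  have hsub : blowupColoring k n c '' (KMP k n).edgeSet ⊆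
      ↑(C ∪ (FP k \ P).biUnion (BP k n c)) := by
    rintro m ⟨e, he, rfl⟩
    induction e using Sym2.ind with
    | _ u v =>
      rw [SimpleGraph.mem_edgeSet] at he
      have hne : u.1 ≠ v.1 := he
      have key : ∀ i j : Fin k, i < j → ∀ (p : Fin (n i)) (q : Fin (n j)),
          blowupColoring k n c s((⟨i, p⟩ : Σ i : Fin k, Fin (n i)), (⟨j, q⟩ : Σ i : Fin k, Fin (n i)))
            ∈ ↑(C ∪ (FP k \ P).biUnion (BP k n c)) := by
        intro i j hij p q
        have hmem : _ ∈ BP k n c (i, j) := mem_BP k n c p q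
        have hF : (i, j) ∈ FP k := by simp [FP, hij]
        by_cases hP : (i, j) ∈ P
        · exact Finset.mem_coe.2 (Finset.mem_union_left _ (hPB _ hP hmem))
        · exact Finset.mem_coe.2 (Finset.mem_union_right _
            (Finset.mem_biUnion.2 ⟨(i, j), Finset.mem_sdiff.2 ⟨hF, hP⟩, hmem⟩))
      obtain ⟨i, p⟩ := u
      obtain ⟨j, q⟩ := v
      rcases lt_or_gt_of_ne hne with h | h
      · exact key i j h p q
      · rw [Sym2.eq_swap]; exact key j i h q p
  calc ncolors (KMP k n) (blowupColoring k n c)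
      ≤ (↑(C ∪ (FP k \ P).biUnion (BP k n c)) : Set ℕ).ncard :=
        Set.ncard_le_ncard hsub (Finset.finite_toSet _)
    _ = (C ∪ (FP k \ P).biUnion (BP k n c)).card := Set.ncard_coe_finset _
    _ ≤ C.card + ((FP k \ P).biUnion (BP k n c)).card := Finset.card_union_le _ _
    _ ≤ C.card + ∑ p ∈ FP k \ P, (BP k n c p).card := by
        gcongr; exact Finset.card_biUnion_le
    _ ≤ C.card + ∑ p ∈ FP k \ P, n p.1 * n p.2 := by
        gcongr with p hp; exact BP_card k n c p

lemma FP_sum : ∑ p ∈ FP k, n p.1 * n p.2 =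
    ∑ i ∈ Finset.range k, ∑ j ∈ Finset.range k, if i < j then n i * n j else 0 := by
  classical
  rw [FP, Finset.sum_filter, ← Finset.univ_product_univ, Finset.sum_product,
    ← Fin.sum_univ_eq_sum_range
      (fun i => ∑ j ∈ Finset.range k, if i < j then n i * n j else 0) k]
  apply Finset.sum_congr rfl
  intro i _
  rw [← Fin.sum_univ_eq_sum_range (fun j => if (i : ℕ) < j then n i * n j else 0) k]
  apply Finset.sum_congr rfl
  intro j _
  by_cases h : (i : ℕ) < (j : ℕ)
  · rw [if_pos h, if_pos (show i < j from h)]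
  · rw [if_neg h, if_neg (show ¬ i < j from h)]

/-- An unordered-pair normal form. -/
def opair (u v : Fin k) : Fin k × Fin k := if u < v then (u, v) else (v, u)

lemma opair_mem_FP {u v : Fin k} (h : u ≠ v) : opair k u v ∈ FP k := by
  unfold opair
  rcases lt_or_gt_of_ne h with h' | h'
  · rw [if_pos h']; simp [FP, h']
  · rw [if_neg (asymm h')]; simp [FP, h']

lemma opair_prod (u v : Fin k) : n (opair k u v).1 * n (opair k u v).2 = n u * n v := by
  unfold opair; split_ifs <;> simp [Nat.mul_comm]

lemma opair_eq_imp {u v u' v' : Fin k} (h : opair k u v = opair k u' v') :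
    (u = u' ∧ v = v') ∨ (u = v' ∧ v = u') := by
  unfold opair at h
  split_ifs at h <;> simp [Prod.ext_iff] at h <;> tauto

end AuxCounting

lemma key1 (m1 m2 m3 a b c : ℕ) (hm1 : 1 ≤ m1) (h12 : m1 ≤ m2) (h23 : m2 ≤ m3)
    (h : (m1 ≤ a ∧ m2 ≤ b ∧ m3 ≤ c) ∨ (m1 ≤ a ∧ m3 ≤ b ∧ m2 ≤ c) ∨
         (m2 ≤ a ∧ m3 ≤ b ∧ m1 ≤ c) ∨ (m3 ≤ a ∧ m2 ≤ b ∧ m1 ≤ c) ∨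
         (m2 ≤ a ∧ m1 ≤ b ∧ m3 ≤ c) ∨ (m3 ≤ a ∧ m1 ≤ b ∧ m2 ≤ c)) :
    a + m1 * (m2 + m3) ≤ a * b + a * c + m1 := by
  zify at *
  rcases h with ⟨h1, h2, h3⟩ | ⟨h1, h2, h3⟩ | ⟨h1, h2, h3⟩ | ⟨h1, h2, h3⟩ | ⟨h1, h2, h3⟩ | ⟨h1, h2, h3⟩ <;>
    nlinarith [mul_nonneg (sub_nonneg.2 h2) (sub_nonneg.2 h1),
      mul_nonneg (sub_nonneg.2 h3) (sub_nonneg.2 h1),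
      mul_nonneg (sub_nonneg.2 h2) (sub_nonneg.2 h3),
      mul_nonneg (sub_nonneg.2 h1) (sub_nonneg.2 h2),
      mul_nonneg (sub_nonneg.2 h12) (sub_nonneg.2 h23),
      mul_nonneg (sub_nonneg.2 h12) (sub_nonneg.2 hm1),
      mul_nonneg (sub_nonneg.2 h23) (sub_nonneg.2 hm1),
      mul_nonneg (sub_nonneg.2 (h12.trans h23)) (sub_nonneg.2 hm1)]

section CaseLemmas

variable {k : ℕ} {n : ℕ → ℕ} {c : Sym2 (Fin k) → ℕ}

lemma BP_subset_nosat {a : ℕ}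
    (hnosat : ∀ v : Fin k, ¬ Saturates (⊤ : SimpleGraph (Fin k)) c v a)
    {u v : Fin k} (hcuv : c s(u, v) = a) :
    BP k n c (opair k u v) ⊆ {Nat.pair 0 a} := by
  have hcvu : c s(v, u) = a := by rw [Sym2.eq_swap]; exact hcuv
  intro m hm
  unfold opair at hm
  split_ifs at hm
  · simp only [BP, Finset.mem_image] at hm
    obtain ⟨⟨p, q⟩, -, rfl⟩ := hm
    rw [BP_eval k n c p q, hcuv,
      if_neg (fun h => hnosat u h.1), if_neg (hnosat u), if_neg (hnosat v)]
    exact Finset.mem_singleton_self _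
  · simp only [BP, Finset.mem_image] at hm
    obtain ⟨⟨p, q⟩, -, rfl⟩ := hm
    rw [BP_eval k n c p q, hcvu,
      if_neg (fun h => hnosat v h.1), if_neg (hnosat v), if_neg (hnosat u)]
    exact Finset.mem_singleton_self _

lemma BP_subset_sat {a : ℕ} {x : Fin k}
    (hx : Saturates (⊤ : SimpleGraph (Fin k)) c x a)
    {v : Fin k} (hcv : c s(x, v) = a)
    (hsv : ¬ Saturates (⊤ : SimpleGraph (Fin k)) c v a) :
    BP k n c (opair k x v) ⊆
      Finset.image (fun p : Fin (n x) =>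
        Nat.pair 1 (Nat.pair a (vcode (⟨x, p⟩ : Σ i : Fin k, Fin (n i))))) Finset.univ := by
  have hcv' : c s(v, x) = a := by rw [Sym2.eq_swap]; exact hcv
  intro m hm
  unfold opair at hm
  split_ifs at hm
  · simp only [BP, Finset.mem_image] at hm
    obtain ⟨⟨p, q⟩, -, rfl⟩ := hm
    rw [BP_eval k n c p q, hcv, if_neg (fun h => hsv h.2), if_pos hx]
    exact Finset.mem_image.2 ⟨p, Finset.mem_univ _, rfl⟩
  · simp only [BP, Finset.mem_image] at hm
    obtain ⟨⟨p, q⟩, -, rfl⟩ := hm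
    rw [BP_eval k n c p q, hcv', if_neg (fun h => hsv h.1), if_neg hsv, if_pos hx]
    exact Finset.mem_image.2 ⟨q, Finset.mem_univ _, rfl⟩

end CaseLemmas

section MainCases

variable {k : ℕ} {n : ℕ → ℕ} {c : Sym2 (Fin k) → ℕ}

lemma case_sat (hk : 3 ≤ k) (hmono : ∀ i j, i ≤ j → j < k → n j ≤ n i)
    (hm1 : 1 ≤ n (k - 1))
    {a : ℕ} {x y z : Fin k}
    (hx : Saturates (⊤ : SimpleGraph (Fin k)) c x a)
    (hxy : x ≠ y) (hxz : x ≠ z) (hyz : y ≠ z)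
    (hcy : c s(x, y) = a) (hcz : c s(x, z) = a) :
    ncolors (KMP k n) (blowupColoring k n c) ≤
      ∑ p ∈ FP k, n p.1 * n p.2 - n (k - 1) * (n (k - 2) + n (k - 3) - 1) := by
  classical
  set m1 := n (k - 1) with hm1d
  set m2 := n (k - 2) with hm2d
  set m3 := n (k - 3) with hm3d
  have hnw : ∀ w : Fin k, m1 ≤ n ↑w := by
    intro w; have := w.isLt; exact hmono ↑w (k - 1) (by omega) (by omega)
  have hn2 : ∀ w : Fin k, (w : ℕ) ≤ k - 2 → m2 ≤ n ↑w := fun w hw =>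
    hmono ↑w (k - 2) hw (by omega)
  have hn3 : ∀ w : Fin k, (w : ℕ) ≤ k - 3 → m3 ≤ n ↑w := fun w hw =>
    hmono ↑w (k - 3) hw (by omega)
  have hsy : ¬ Saturates (⊤ : SimpleGraph (Fin k)) c y a := by
    intro hs
    have hmem : y ∈ s(x, z) := hs.2 s(x, z) (by simpa using hxz) hcz
    rw [Sym2.mem_iff] at hmem
    rcases hmem with h | h
    · exact hxy h.symm
    · exact hyz h
  have hsz : ¬ Saturates (⊤ : SimpleGraph (Fin k)) c z a := by
    intro hs
    have hmem : z ∈ s(x, y) := hs.2 s(x, y) (by simpa using hxy) hcy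
    rw [Sym2.mem_iff] at hmem
    rcases hmem with h | h
    · exact hxz h.symm
    · exact hyz h.symm
  set Cx := Finset.image (fun p : Fin (n x) =>
    Nat.pair 1 (Nat.pair a (vcode (⟨x, p⟩ : Σ i : Fin k, Fin (n i))))) Finset.univ with hCxd
  set P : Finset (Fin k × Fin k) := {opair k x y, opair k x z} with hPd
  have hne' : opair k x y ≠ opair k x z := by
    intro h
    rcases opair_eq_imp k h with ⟨h1, h2⟩ | ⟨h1, h2⟩
    · exact hyz h2
    · exact hxz h1
  have hPF : P ⊆ FP k := by
    intro p hp
    rcases Finset.mem_insert.mp hp with rfl | hp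
    · exact opair_mem_FP k hxy
    · rw [Finset.mem_singleton.mp hp]; exact opair_mem_FP k hxz
  have hPB : ∀ p ∈ P, BP k n c p ⊆ Cx := by
    intro p hp
    rcases Finset.mem_insert.mp hp with rfl | hp
    · exact BP_subset_sat hx hcy hsy
    · rw [Finset.mem_singleton.mp hp]; exact BP_subset_sat hx hcz hsz
  have hcb := count_bound k n c Cx P hPF hPB
  have hsd := Finset.sum_sdiff (f := fun p : Fin k × Fin k => n p.1 * n p.2) hPF
  have hsump : ∑ p ∈ P, n p.1 * n p.2 = n ↑x * n ↑y + n ↑x * n ↑z := by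
    rw [hPd, Finset.sum_pair hne', opair_prod, opair_prod]
  have hCcard : Cx.card ≤ n ↑x := le_trans Finset.card_image_le (by simp)
  have hvx := x.isLt; have hvy := y.isLt; have hvz := z.isLt
  have hvxy : (x : ℕ) ≠ (y : ℕ) := fun h => hxy (Fin.val_injective h)
  have hvxz : (x : ℕ) ≠ (z : ℕ) := fun h => hxz (Fin.val_injective h)
  have hvyz : (y : ℕ) ≠ (z : ℕ) := fun h => hyz (Fin.val_injective h)
  have hm12 : m1 ≤ m2 := hmono (k - 2) (k - 1) (by omega) (by omega)
  have hm23' : m2 ≤ m3 := hmono (k - 3) (k - 2) (by omega) (by omega)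
  have hkey : n ↑x + m1 * (m2 + m3) ≤ n ↑x * n ↑y + n ↑x * n ↑z + m1 := by
    apply key1 m1 m2 m3 _ _ _ hm1 hm12 hm23'
    rcases Nat.lt_or_ge (x : ℕ) (y : ℕ) with h1 | h1 <;>
      rcases Nat.lt_or_ge (y : ℕ) (z : ℕ) with h2 | h2 <;>
      rcases Nat.lt_or_ge (x : ℕ) (z : ℕ) with h3 | h3
    · exact Or.inr (Or.inr (Or.inr (Or.inl
        ⟨hn3 x (by omega), hn2 y (by omega), hnw z⟩)))
    · exfalso; omega
    · exact Or.inr (Or.inr (Or.inr (Or.inr (Or.inr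
        ⟨hn3 x (by omega), hnw y, hn2 z (by omega)⟩))))
    · exact Or.inr (Or.inr (Or.inr (Or.inr (Or.inl
        ⟨hn2 x (by omega), hnw y, hn3 z (by omega)⟩))))
    · exact Or.inr (Or.inr (Or.inl ⟨hn2 x (by omega), hn3 y (by omega), hnw z⟩))
    · exact Or.inr (Or.inl ⟨hnw x, hn3 y (by omega), hn2 z (by omega)⟩)
    · exfalso; omega
    · exact Or.inl ⟨hnw x, hn2 y (by omega), hn3 z (by omega)⟩
  have hDm : m1 * (m2 + m3 - 1) + m1 = m1 * (m2 + m3) := by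
    have h : (m2 + m3 - 1) + 1 = m2 + m3 := by omega
    conv_rhs => rw [← h]
    rw [Nat.mul_succ]
  apply Nat.le_sub_of_add_le
  linarith [hcb, hCcard, hsd, hsump, hkey, hDm]

end MainCases

section MainCases2

variable {k : ℕ} {n : ℕ → ℕ} {c : Sym2 (Fin k) → ℕ}

lemma case_disjoint (hk : 3 ≤ k) (hmono : ∀ i j, i ≤ j → j < k → n j ≤ n i)
    (hm1 : 1 ≤ n (k - 1))
    {a : ℕ} (hnosat : ∀ v : Fin k, ¬ Saturates (⊤ : SimpleGraph (Fin k)) c v a)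
    {x y z w : Fin k} (hxy : x ≠ y) (hzw : z ≠ w) (hxz : x ≠ z) (hxw : x ≠ w)
    (hyz : y ≠ z) (hyw : y ≠ w)
    (hcxy : c s(x, y) = a) (hczw : c s(z, w) = a) :
    ncolors (KMP k n) (blowupColoring k n c) ≤
      ∑ p ∈ FP k, n p.1 * n p.2 - n (k - 1) * (n (k - 2) + n (k - 3) - 1) := by
  classical
  set m1 := n (k - 1) with hm1d
  set m2 := n (k - 2) with hm2d
  set m3 := n (k - 3) with hm3d
  have hnw : ∀ u : Fin k, m1 ≤ n ↑u := by
    intro u; have := u.isLt; exact hmono ↑u (k - 1) (by omega) (by omega)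
  have hn2 : ∀ u : Fin k, (u : ℕ) ≤ k - 2 → m2 ≤ n ↑u := fun u hu =>
    hmono ↑u (k - 2) hu (by omega)
  have hn3 : ∀ u : Fin k, (u : ℕ) ≤ k - 3 → m3 ≤ n ↑u := fun u hu =>
    hmono ↑u (k - 3) hu (by omega)
  have pairProd : ∀ u v : Fin k, u ≠ v → m1 * m2 ≤ n ↑u * n ↑v := by
    intro u v huv
    have h1 := u.isLt; have h2 := v.isLt
    have hne : (u : ℕ) ≠ (v : ℕ) := fun h => huv (Fin.val_injective h)
    rcases Nat.lt_or_ge (u : ℕ) (v : ℕ) with h | h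
    · calc m1 * m2 = m2 * m1 := Nat.mul_comm _ _
        _ ≤ n ↑u * n ↑v := Nat.mul_le_mul (hn2 u (by omega)) (hnw v)
    · exact Nat.mul_le_mul (hnw u) (hn2 v (by omega))
  have pairProd3 : ∀ u v : Fin k, (u : ℕ) ≤ k - 3 → m1 * m3 ≤ n ↑u * n ↑v := by
    intro u v hu
    calc m1 * m3 = m3 * m1 := Nat.mul_comm _ _
      _ ≤ n ↑u * n ↑v := Nat.mul_le_mul (hn3 u hu) (hnw v)
  have pairProd3' : ∀ u v : Fin k, (v : ℕ) ≤ k - 3 → m1 * m3 ≤ n ↑u * n ↑v := by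
    intro u v hv
    exact Nat.mul_le_mul (hnw u) (hn3 v hv)
  set P : Finset (Fin k × Fin k) := {opair k x y, opair k z w} with hPd
  have hne' : opair k x y ≠ opair k z w := by
    intro h
    rcases opair_eq_imp k h with ⟨h1, h2⟩ | ⟨h1, h2⟩
    · exact hxz h1
    · exact hxw h1
  have hPF : P ⊆ FP k := by
    intro p hp
    rcases Finset.mem_insert.mp hp with rfl | hp
    · exact opair_mem_FP k hxy
    · rw [Finset.mem_singleton.mp hp]; exact opair_mem_FP k hzw
  have hPB : ∀ p ∈ P, BP k n c p ⊆ {Nat.pair 0 a} := by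
    intro p hp
    rcases Finset.mem_insert.mp hp with rfl | hp
    · exact BP_subset_nosat hnosat hcxy
    · rw [Finset.mem_singleton.mp hp]; exact BP_subset_nosat hnosat hczw
  have hcb := count_bound k n c {Nat.pair 0 a} P hPF hPB
  have hsd := Finset.sum_sdiff (f := fun p : Fin k × Fin k => n p.1 * n p.2) hPF
  have hsump : ∑ p ∈ P, n p.1 * n p.2 = n ↑x * n ↑y + n ↑z * n ↑w := by
    rw [hPd, Finset.sum_pair hne', opair_prod, opair_prod]
  have hCcard : ({Nat.pair 0 a} : Finset ℕ).card = 1 := Finset.card_singleton _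
  have hvx := x.isLt; have hvy := y.isLt; have hvz := z.isLt; have hvw := w.isLt
  have hvxy : (x : ℕ) ≠ (y : ℕ) := fun h => hxy (Fin.val_injective h)
  have hvzw : (z : ℕ) ≠ (w : ℕ) := fun h => hzw (Fin.val_injective h)
  have hvxz : (x : ℕ) ≠ (z : ℕ) := fun h => hxz (Fin.val_injective h)
  have hvxw : (x : ℕ) ≠ (w : ℕ) := fun h => hxw (Fin.val_injective h)
  have hvyz : (y : ℕ) ≠ (z : ℕ) := fun h => hyz (Fin.val_injective h)
  have hvyw : (y : ℕ) ≠ (w : ℕ) := fun h => hyw (Fin.val_injective h)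
  have hm12 : m1 ≤ m2 := hmono (k - 2) (k - 1) (by omega) (by omega)
  have hm23' : m2 ≤ m3 := hmono (k - 3) (k - 2) (by omega) (by omega)
  have hlow : (x : ℕ) ≤ k - 3 ∨ (y : ℕ) ≤ k - 3 ∨ (z : ℕ) ≤ k - 3 ∨ (w : ℕ) ≤ k - 3 := by
    omega
  have hpp : m1 * m3 + m1 * m2 ≤ n ↑x * n ↑y + n ↑z * n ↑w := by
    rcases hlow with h | h | h | h
    · exact Nat.add_le_add (pairProd3 x y h) (pairProd z w hzw)
    · exact Nat.add_le_add (pairProd3' x y h) (pairProd z w hzw)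
    · have h1 := pairProd x y hxy
      have h2 := pairProd3 z w h
      linarith
    · have h1 := pairProd x y hxy
      have h2 := pairProd3' z w h
      linarith
  have hDm : m1 * (m2 + m3 - 1) + m1 = m1 * m2 + m1 * m3 := by
    have h : (m2 + m3 - 1) + 1 = m2 + m3 := by omega
    calc m1 * (m2 + m3 - 1) + m1 = m1 * ((m2 + m3 - 1) + 1) := (Nat.mul_succ _ _).symm
      _ = m1 * (m2 + m3) := by rw [h]
      _ = m1 * m2 + m1 * m3 := Nat.mul_add _ _ _
  apply Nat.le_sub_of_add_le
  linarith [hcb, hsd, hsump, hpp, hDm, hm1]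

lemma case_triangle (hk : 3 ≤ k) (hmono : ∀ i j, i ≤ j → j < k → n j ≤ n i)
    (hm1 : 1 ≤ n (k - 1))
    {a : ℕ} (hnosat : ∀ v : Fin k, ¬ Saturates (⊤ : SimpleGraph (Fin k)) c v a)
    {x y z : Fin k} (hxy : x ≠ y) (hxz : x ≠ z) (hyz : y ≠ z)
    (hcxy : c s(x, y) = a) (hcxz : c s(x, z) = a) (hcyz : c s(y, z) = a) :
    ncolors (KMP k n) (blowupColoring k n c) ≤
      ∑ p ∈ FP k, n p.1 * n p.2 - n (k - 1) * (n (k - 2) + n (k - 3) - 1) := by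
  classical
  set m1 := n (k - 1) with hm1d
  set m2 := n (k - 2) with hm2d
  set m3 := n (k - 3) with hm3d
  have hnw : ∀ u : Fin k, m1 ≤ n ↑u := by
    intro u; have := u.isLt; exact hmono ↑u (k - 1) (by omega) (by omega)
  have hn2 : ∀ u : Fin k, (u : ℕ) ≤ k - 2 → m2 ≤ n ↑u := fun u hu =>
    hmono ↑u (k - 2) hu (by omega)
  have hn3 : ∀ u : Fin k, (u : ℕ) ≤ k - 3 → m3 ≤ n ↑u := fun u hu =>
    hmono ↑u (k - 3) hu (by omega)
  have pairProd : ∀ u v : Fin k, u ≠ v → m1 * m2 ≤ n ↑u * n ↑v := by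
    intro u v huv
    have h1 := u.isLt; have h2 := v.isLt
    have hne : (u : ℕ) ≠ (v : ℕ) := fun h => huv (Fin.val_injective h)
    rcases Nat.lt_or_ge (u : ℕ) (v : ℕ) with h | h
    · calc m1 * m2 = m2 * m1 := Nat.mul_comm _ _
        _ ≤ n ↑u * n ↑v := Nat.mul_le_mul (hn2 u (by omega)) (hnw v)
    · exact Nat.mul_le_mul (hnw u) (hn2 v (by omega))
  have pairProd3 : ∀ u v : Fin k, (u : ℕ) ≤ k - 3 → m1 * m3 ≤ n ↑u * n ↑v := by
    intro u v hu
    calc m1 * m3 = m3 * m1 := Nat.mul_comm _ _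
      _ ≤ n ↑u * n ↑v := Nat.mul_le_mul (hn3 u hu) (hnw v)
  have pairProd3' : ∀ u v : Fin k, (v : ℕ) ≤ k - 3 → m1 * m3 ≤ n ↑u * n ↑v := by
    intro u v hv
    exact Nat.mul_le_mul (hnw u) (hn3 v hv)
  set P : Finset (Fin k × Fin k) := {opair k x y, opair k x z, opair k y z} with hPd
  have d1 : opair k x y ≠ opair k x z := by
    intro h; rcases opair_eq_imp k h with ⟨h1, h2⟩ | ⟨h1, h2⟩
    · exact hyz h2
    · exact hxz h1
  have d2 : opair k x y ≠ opair k y z := by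
    intro h; rcases opair_eq_imp k h with ⟨h1, h2⟩ | ⟨h1, h2⟩
    · exact hxy h1
    · exact hxz h1
  have d3 : opair k x z ≠ opair k y z := by
    intro h; rcases opair_eq_imp k h with ⟨h1, h2⟩ | ⟨h1, h2⟩
    · exact hxy h1
    · exact hyz h2.symm
  have hPF : P ⊆ FP k := by
    intro p hp
    simp only [hPd, Finset.mem_insert, Finset.mem_singleton] at hp
    rcases hp with rfl | rfl | rfl
    · exact opair_mem_FP k hxy
    · exact opair_mem_FP k hxz
    · exact opair_mem_FP k hyz
  have hPB : ∀ p ∈ P, BP k n c p ⊆ {Nat.pair 0 a} := by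
    intro p hp
    simp only [hPd, Finset.mem_insert, Finset.mem_singleton] at hp
    rcases hp with rfl | rfl | rfl
    · exact BP_subset_nosat hnosat hcxy
    · exact BP_subset_nosat hnosat hcxz
    · exact BP_subset_nosat hnosat hcyz
  have hcb := count_bound k n c {Nat.pair 0 a} P hPF hPB
  have hsd := Finset.sum_sdiff (f := fun p : Fin k × Fin k => n p.1 * n p.2) hPF
  have hsump : ∑ p ∈ P, n p.1 * n p.2 =
      n ↑x * n ↑y + (n ↑x * n ↑z + n ↑y * n ↑z) := by
    rw [hPd, Finset.sum_insert (by simp [d1, d2]), Finset.sum_pair d3,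
      opair_prod, opair_prod, opair_prod]
  have hvx := x.isLt; have hvy := y.isLt; have hvz := z.isLt
  have hvxy : (x : ℕ) ≠ (y : ℕ) := fun h => hxy (Fin.val_injective h)
  have hvxz : (x : ℕ) ≠ (z : ℕ) := fun h => hxz (Fin.val_injective h)
  have hvyz : (y : ℕ) ≠ (z : ℕ) := fun h => hyz (Fin.val_injective h)
  have hm12 : m1 ≤ m2 := hmono (k - 2) (k - 1) (by omega) (by omega)
  have hm23' : m2 ≤ m3 := hmono (k - 3) (k - 2) (by omega) (by omega)
  have hlow : (x : ℕ) ≤ k - 3 ∨ (y : ℕ) ≤ k - 3 ∨ (z : ℕ) ≤ k - 3 := by omega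
  have hpp : m1 * m3 + m1 * m2 ≤ n ↑x * n ↑y + (n ↑x * n ↑z + n ↑y * n ↑z) := by
    rcases hlow with h | h | h
    · have h1 := pairProd3 x y h
      have h2 := pairProd y z hyz
      linarith [Nat.zero_le (n ↑x * n ↑z)]
    · have h1 := pairProd3 y z h
      have h2 := pairProd x y hxy
      linarith [Nat.zero_le (n ↑x * n ↑z)]
    · have h1 := pairProd3' x z h
      have h2 := pairProd x y hxy
      linarith [Nat.zero_le (n ↑y * n ↑z)]
  have hDm : m1 * (m2 + m3 - 1) + m1 = m1 * m2 + m1 * m3 := by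
    have h : (m2 + m3 - 1) + 1 = m2 + m3 := by omega
    calc m1 * (m2 + m3 - 1) + m1 = m1 * ((m2 + m3 - 1) + 1) := (Nat.mul_succ _ _).symm
      _ = m1 * (m2 + m3) := by rw [h]
      _ = m1 * m2 + m1 * m3 := Nat.mul_add _ _ _
  have hCcard : ({Nat.pair 0 a} : Finset ℕ).card = 1 := Finset.card_singleton _
  apply Nat.le_sub_of_add_le
  linarith [hcb, hsd, hsump, hpp, hDm, hm1]

end MainCases2

/-- Upper bound: the blow-up of any non-rainbow edge-coloring of `K_k` uses at most
`∑_{i<j} n_i n_j - n_k (n_{k-1} + n_{k-2} - 1)` colors, where `n₁ ≥ … ≥ n_k`. -/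
theorem blowupColoring_ncolors_le (k : ℕ) (hk : 3 ≤ k) (n : ℕ → ℕ)
    (hmono : ∀ i j, i ≤ j → j < k → n j ≤ n i)
    (c : Sym2 (Fin k) → ℕ)
    (hnr : ∃ e₁ ∈ (⊤ : SimpleGraph (Fin k)).edgeSet,
      ∃ e₂ ∈ (⊤ : SimpleGraph (Fin k)).edgeSet, e₁ ≠ e₂ ∧ c e₁ = c e₂) :
    ncolors (KMP k n) (blowupColoring k n c) ≤
      (∑ i ∈ Finset.range k, ∑ j ∈ Finset.range k, if i < j then n i * n j else 0)
        - n (k - 1) * (n (k - 2) + n (k - 3) - 1) := by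
  classical
  obtain ⟨e₁, he₁, e₂, he₂, hne12, hceq⟩ := hnr
  rw [← FP_sum k n]
  by_cases hD : n (k - 1) * (n (k - 2) + n (k - 3) - 1) = 0
  · rw [hD]
    have hcb := count_bound k n c ∅ ∅ (Finset.empty_subset _) (by simp)
    simp only [Finset.card_empty, Finset.sdiff_empty, Nat.zero_add] at hcb
    omega
  have hm1 : 1 ≤ n (k - 1) := by
    rcases Nat.eq_zero_or_pos (n (k - 1)) with h | h
    · exact absurd (by rw [h, Nat.zero_mul]) hD
    · exact h
  set a := c e₁ with ha
  by_cases hsat : ∃ x, Saturates (⊤ : SimpleGraph (Fin k)) c x a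
  · obtain ⟨x, hx⟩ := hsat
    have hxe₁ : x ∈ e₁ := hx.2 e₁ he₁ ha.symm
    have hxe₂ : x ∈ e₂ := hx.2 e₂ he₂ hceq.symm
    obtain ⟨y, hey⟩ := Sym2.mem_iff_exists.mp hxe₁
    obtain ⟨z, hez⟩ := Sym2.mem_iff_exists.mp hxe₂
    have hxy : x ≠ y := by rw [hey] at he₁; simpa using he₁
    have hxz : x ≠ z := by rw [hez] at he₂; simpa using he₂
    have hyz : y ≠ z := by
      intro h; apply hne12; rw [hey, hez, h]
    have hcy : c s(x, y) = a := by rw [← hey]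
    have hcz : c s(x, z) = a := by rw [← hez]; exact hceq.symm
    exact case_sat hk hmono hm1 hx hxy hxz hyz hcy hcz
  · push_neg at hsat
    have hex : ∀ v : Fin k, ∃ e ∈ (⊤ : SimpleGraph (Fin k)).edgeSet, c e = a ∧ v ∉ e := by
      intro v
      have h := hsat v
      unfold Saturates at h
      push_neg at h
      exact h ⟨e₁, he₁, ha.symm⟩
    obtain ⟨x, y, hexy⟩ : ∃ x y, e₁ = s(x, y) := Sym2.ind (fun x y => ⟨x, y, rfl⟩) e₁
    have hxy : x ≠ y := by rw [hexy] at he₁; simpa using he₁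
    have hcxy : c s(x, y) = a := by rw [← hexy]
    obtain ⟨e', he'E, he'c, hxe'⟩ := hex x
    obtain ⟨z, w, hezw⟩ : ∃ z w, e' = s(z, w) := Sym2.ind (fun z w => ⟨z, w, rfl⟩) e'
    have hzw : z ≠ w := by rw [hezw] at he'E; simpa using he'E
    have hczw : c s(z, w) = a := by rw [← hezw]; exact he'c
    rw [hezw, Sym2.mem_iff] at hxe'
    push_neg at hxe'
    obtain ⟨hxz, hxw⟩ := hxe'
    by_cases hyzw : y = z ∨ y = w
    · -- e' shares exactly the vertex y with e₁
      have hshare : ∃ w' : Fin k, w' ≠ x ∧ w' ≠ y ∧ c s(y, w') = a := by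
        rcases hyzw with rfl | rfl
        · exact ⟨w, fun h => hxw h.symm, fun h => hzw h.symm, hczw⟩
        · refine ⟨z, fun h => hxz h.symm, fun h => hzw h, ?_⟩
          rw [Sym2.eq_swap]; exact hczw
      obtain ⟨w', hw'x, hw'y, hcyw'⟩ := hshare
      obtain ⟨e'', he''E, he''c, hye''⟩ := hex y
      by_cases hxe'' : x ∈ e''
      · obtain ⟨t, het⟩ := Sym2.mem_iff_exists.mp hxe''
        have hxt : x ≠ t := by rw [het] at he''E; simpa using he''E
        have hct : c s(x, t) = a := by rw [← het]; exact he''c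
        have hyt : y ≠ t := by
          intro h
          exact hye'' (by rw [het, h]; exact Sym2.mem_mk_right _ _)
        by_cases htw : t = w'
        · subst htw
          exact case_triangle hk hmono hm1 hsat hxy hxt hw'y.symm hcxy hct hcyw'
        · exact case_disjoint hk hmono hm1 hsat hw'y.symm hxt hxy.symm hyt hw'x
            (fun h => htw h.symm) hcyw' hct
      · obtain ⟨u, v, heuv⟩ : ∃ u v, e'' = s(u, v) := Sym2.ind (fun u v => ⟨u, v, rfl⟩) e''
        have huv : u ≠ v := by rw [heuv] at he''E; simpa using he''E
        have hcuv : c s(u, v) = a := by rw [← heuv]; exact he''c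
        rw [heuv, Sym2.mem_iff] at hxe'' hye''
        push_neg at hxe'' hye''
        exact case_disjoint hk hmono hm1 hsat hxy huv hxe''.1 hxe''.2 hye''.1 hye''.2 hcxy hcuv
    · push_neg at hyzw
      exact case_disjoint hk hmono hm1 hsat hxy hzw hxz hxw hyzw.1 hyzw.2 hcxy hczw
end
end

section
/- For r > k ≥ 4 and t ≥ 1, there exists an edge-coloring of K_r^t with no rainbow K_k using exactly t²·ex(K_r, K_{k−1}) + 1 colors. (Lower bound via the Turán coloring.) -/
open Classical

noncomputable section

/-!
Take an extremal `K_{k-1}`-free graph `H` on the `r` parts and blow it up to `G` on `K_r^t`.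
Give the `t² ex(K_r, K_{k-1})` edges of `G` pairwise distinct colors and every other edge of
`K_r^t` one common extra color, which occurs since `H` is not complete. A rainbow `K_k` has at
most one edge of the extra color, so deleting an endpoint of that edge leaves a `K_{k-1}` in `G`,
whose parts span a `K_{k-1}` in `H`.
-/

namespace SimpleGraph

variable {α β V : Type*}

theorem cliqueFree_comap {H : SimpleGraph β} {n : ℕ} (π : α → β) (h : H.CliqueFree n) :
    (H.comap π).CliqueFree n := by
  contrapose h
  rw [not_cliqueFree_iff_top_isContained] at h ⊢
  obtain ⟨f⟩ := h
  let g : completeGraph (Fin n) →g H := (⟨π, id⟩ : H.comap π →g H).comp f.toHom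
  exact ⟨g.toCopy (Hom.injective_of_top_hom g)⟩

theorem exists_ne_not_adj_of_cliqueFree [Fintype α] {H : SimpleGraph α} {n : ℕ}
    (h : H.CliqueFree n) (hn : n ≤ Fintype.card α) : ∃ i j, i ≠ j ∧ ¬ H.Adj i j := by
  by_contra! hcomplete
  obtain ⟨T, -, hT⟩ := Finset.exists_subset_card_eq (s := Finset.univ) (n := n) (by simpa)
  exact h T ⟨fun i _ j _ hij => hcomplete i j hij, hT⟩

theorem ncard_edgeSet_comap_sigmaFst [Fintype α] [Fintype β] (H : SimpleGraph α) :
    (H.comap (Sigma.fst : (Σ _ : α, β) → α)).edgeSet.ncard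
      = Fintype.card β ^ 2 * H.edgeSet.ncard := by
  set G := H.comap (Sigma.fst : (Σ _ : α, β) → α)
  have darts : G.Dart ≃ H.Dart × (β × β) :=
    { toFun := fun d => (⟨(d.fst.1, d.snd.1), d.adj⟩, (d.fst.2, d.snd.2))
      invFun := fun p => ⟨(⟨p.1.fst, p.2.1⟩, ⟨p.1.snd, p.2.2⟩), p.1.adj⟩
      left_inv := fun _ => rfl
      right_inv := fun _ => rfl }
  have hcard := Fintype.card_congr darts
  rw [Fintype.card_prod, Fintype.card_prod, dart_card_eq_twice_card_edges,
    dart_card_eq_twice_card_edges] at hcard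
  rw [Set.ncard_eq_toFinset_card', Set.ncard_eq_toFinset_card']
  simp only [Set.toFinset_card, ← edgeFinset_card] at hcard ⊢
  nlinarith

def rainbowOn (G : SimpleGraph V) (f : Sym2 V → ℕ) : Sym2 V → ℕ :=
  fun e => if e ∈ G.edgeSet then f e + 1 else 0

theorem exists_isClique_erase_of_nonadj_subsingleton {G : SimpleGraph V} {S : Finset V}
    (hS : S.Nonempty)
    (h : ∀ x ∈ S, ∀ y ∈ S, ∀ z ∈ S, ∀ w ∈ S, x ≠ y → z ≠ w → ¬ G.Adj x y → ¬ G.Adj z w →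
      s(x, y) = s(z, w)) :
    ∃ x ∈ S, G.IsClique (S.erase x : Set V) := by
  by_cases hclique : G.IsClique (S : Set V)
  · obtain ⟨x, hx⟩ := hS
    exact ⟨x, hx, hclique.subset (by simp)⟩
  simp only [IsClique, Set.Pairwise, not_forall, Finset.mem_coe] at hclique
  obtain ⟨x₀, hx₀, y₀, hy₀, hne₀, hnadj₀⟩ := hclique
  refine ⟨x₀, hx₀, fun x hx y hy hxy => ?_⟩
  simp only [Finset.coe_erase, Set.mem_sdiff, Finset.mem_coe, Set.mem_singleton_iff] at hx hy
  by_contra hnadj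
  rcases Sym2.eq_iff.mp (h x hx.1 y hy.1 x₀ hx₀ y₀ hy₀ hxy hne₀ hnadj hnadj₀) with
    ⟨hx₀', -⟩ | ⟨-, hy₀'⟩
  · exact hx.2 hx₀'
  · exact hy.2 hy₀'

theorem not_hasRainbowClique_rainbowOn (K G : SimpleGraph V) (f : Sym2 V → ℕ) {m : ℕ}
    (hG : G.CliqueFree m) : ¬ HasRainbowClique K (rainbowOn G f) (m + 1) := by
  rintro ⟨S, hcard, -, hrainbow⟩
  have hS : S.Nonempty := by rw [← Finset.card_pos, hcard]; omega
  obtain ⟨x, hx, hclique⟩ := exists_isClique_erase_of_nonadj_subsingleton (G := G) hS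
    fun x hx y hy z hz w hw hxy hzw hnxy hnzw => hrainbow x hx y hy z hz w hw hxy hzw
      (by simp only [rainbowOn, mem_edgeSet, hnxy, hnzw, if_false])
  exact hG _ ⟨hclique, by rw [Finset.card_erase_of_mem hx, hcard, Nat.add_sub_cancel]⟩

theorem ncolors_rainbowOn {K G : SimpleGraph V} {f : Sym2 V → ℕ} (hf : f.Injective)
    (hGK : G ≤ K) (hfin : G.edgeSet.Finite) (hextra : ∃ e ∈ K.edgeSet, e ∉ G.edgeSet) :
    ncolors K (rainbowOn G f) = G.edgeSet.ncard + 1 := by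
  have himage : rainbowOn G f '' K.edgeSet = insert 0 ((f · + 1) '' G.edgeSet) := by
    apply Set.Subset.antisymm
    · rintro _ ⟨e, -, rfl⟩
      by_cases he : e ∈ G.edgeSet
      · exact Or.inr ⟨e, he, by simp [rainbowOn, he]⟩
      · simp [rainbowOn, he]
    · rintro _ (rfl | ⟨e, he, rfl⟩)
      · obtain ⟨e, heK, heG⟩ := hextra
        exact ⟨e, heK, by simp [rainbowOn, heG]⟩
      · exact ⟨e, edgeSet_subset_edgeSet.mpr hGK he, by simp [rainbowOn, he]⟩
  rw [ncolors, himage, Set.ncard_insert_of_notMem (by simp) (hfin.image _),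
    Set.ncard_image_of_injective _ fun a b h => hf (by simpa using h)]

end SimpleGraph

theorem exists_cliqueFree_ncard_edgeSet_eq_exNum (n m : ℕ) (hm : 2 ≤ m) :
    ∃ H : SimpleGraph (Fin n), H.CliqueFree m ∧ H.edgeSet.ncard = exNum n m := by
  set E := {e | ∃ H : SimpleGraph (Fin n), H.CliqueFree m ∧ H.edgeSet.ncard = e}
  have hbdd : BddAbove E := by
    refine ⟨Nat.card (Sym2 (Fin n)), ?_⟩
    rintro _ ⟨H, -, rfl⟩
    exact Set.ncard_le_card _
  exact Nat.sSup_mem (s := E) ⟨0, ⊥, SimpleGraph.cliqueFree_bot hm, by simp⟩ hbdd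

open SimpleGraph in
/-- Lower bound (Turán coloring): for `r > k ≥ 4` and `t ≥ 1` there is an edge-coloring
of `K_r^t` with no rainbow `K_k` using exactly `t² ex(K_r, K_{k-1}) + 1` colors. -/
theorem exists_turan_coloring (r k t : ℕ) (hk : 4 ≤ k) (hkr : k < r) (ht : 1 ≤ t) :
    ∃ c : Sym2 (Σ _ : Fin r, Fin t) → ℕ,
      ¬ HasRainbowClique (KMP r (fun _ => t)) c k ∧
      ncolors (KMP r (fun _ => t)) c = t ^ 2 * exNum r (k - 1) + 1 := by
  obtain ⟨H, hH, hHcard⟩ := exists_cliqueFree_ncard_edgeSet_eq_exNum r (k - 1) (by omega)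
  obtain ⟨i, j, hij, hnadj⟩ := exists_ne_not_adj_of_cliqueFree hH (by simp; omega)
  obtain ⟨f, hf⟩ := Countable.exists_injective_nat (Sym2 (Σ _ : Fin r, Fin t))
  set G := H.comap (Sigma.fst : (Σ _ : Fin r, Fin t) → Fin r)
  refine ⟨rainbowOn G f, ?_, ?_⟩
  · have := not_hasRainbowClique_rainbowOn (KMP r fun _ => t) G f (cliqueFree_comap _ hH)
    rwa [Nat.sub_add_cancel (by omega)] at this
  · have hGK : G ≤ KMP r fun _ => t := fun x y h => show x.1 ≠ y.1 from H.ne_of_adj h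
    have hextra : ∃ e ∈ (KMP r fun _ => t).edgeSet, e ∉ G.edgeSet :=
      ⟨s(⟨i, ⟨0, ht⟩⟩, ⟨j, ⟨0, ht⟩⟩), hij, hnadj⟩
    rw [ncolors_rainbowOn hf hGK (Set.toFinite _) hextra, ncard_edgeSet_comap_sigmaFst,
      Fintype.card_fin, hHcard]
end
end
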